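/- For all partitions μ ⊆ λ and all n ≥ 1, the operator-defined skew Grothendieck polynomial equals the set-valued-tableau generating function: ⟨A(x_n)⋯A(x_1)·μ, λ⟩ = Σ_T (−β)^{|T| − |λ/μ|} x^T, the sum over all set-valued tableaux T of shape λ//μ with all entries in {1,…,n}; this is an identity of polynomials in R[x_1,…,x_n]. -/

import Mathlib

open scoped Classical

noncomputable section

/-- The Schur "up" operator `u_{j+1}` (columns indexed from 0): on a basis partition `μ`,
it adds a box at the bottom of column `j` if the result is a Young diagram, else gives `0`. -/
def schurU (R : Type*) [CommRing R] (j : ℕ) :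
    Module.End R (YoungDiagram →₀ R) :=
  Finsupp.lift (YoungDiagram →₀ R) R YoungDiagram fun μ =>
    if h : ∃ lam : YoungDiagram, lam.cells = insert (μ.colLen j, j) μ.cells
    then Finsupp.single h.choose 1 else 0

/-- The Schur "down" operator `d_{j+1}`: on a basis partition `λ`, it removes the bottom box
of column `j` if the result is a Young diagram, else gives `0`. -/
def schurD (R : Type*) [CommRing R] (j : ℕ) :
    Module.End R (YoungDiagram →₀ R) :=
  Finsupp.lift (YoungDiagram →₀ R) R YoungDiagram fun lam =>
    if h : ∃ μ : YoungDiagram, lam.cells = insert (μ.colLen j, j) μ.cells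
    then Finsupp.single h.choose 1 else 0

/-- The deformed operator `ũ_{j+1} = u_{j+1} - β u_{j+1} d_{j+1}`. -/
def utilde (R : Type*) [CommRing R] (β : R) (j : ℕ) :
    Module.End R (YoungDiagram →₀ R) :=
  schurU R j - β • (schurU R j * schurD R j)

/-- The deformed operator `d̃_{j+1} = d_{j+1} + β d_{j+1}² + β² d_{j+1}³ + ⋯`
(a finite sum on each basis element). -/
def dtilde (R : Type*) [CommRing R] (β : R) (j : ℕ) :
    Module.End R (YoungDiagram →₀ R) :=
  Finsupp.lift (YoungDiagram →₀ R) R YoungDiagram fun lam =>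
    ∑ l ∈ Finset.range (lam.colLen j), β ^ l • ((schurD R j) ^ (l + 1)) (Finsupp.single lam 1)


/-- The cells of the skew shape `λ/μ`. -/
def skewCells (μ lam : YoungDiagram) : Finset (ℕ × ℕ) := lam.cells \ μ.cells

/-- `|λ/μ|`, the number of boxes of the skew shape `λ/μ`. -/
def skewSize (μ lam : YoungDiagram) : ℕ := (skewCells μ lam).card

/-- `c(λ/μ)`, the number of columns containing a box of `λ/μ`. -/
def skewCols (μ lam : YoungDiagram) : ℕ := ((skewCells μ lam).image Prod.snd).card

/-- `r(λ/μ)`, the number of rows containing a box of `λ/μ`. -/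
def skewRows (μ lam : YoungDiagram) : ℕ := ((skewCells μ lam).image Prod.fst).card

/-- `λ/μ` is a horizontal strip: `μ ⊆ λ` and no two boxes of `λ/μ` lie in the same column. -/
def IsHorizontalStrip (μ lam : YoungDiagram) : Prop :=
  μ ≤ lam ∧ ∀ c ∈ skewCells μ lam, ∀ c' ∈ skewCells μ lam, c.2 = c'.2 → c = c'

/-- `λ/μ` is a vertical strip: `μ ⊆ λ` and no two boxes of `λ/μ` lie in the same row. -/
def IsVerticalStrip (μ lam : YoungDiagram) : Prop :=
  μ ≤ lam ∧ ∀ c ∈ skewCells μ lam, ∀ c' ∈ skewCells μ lam, c.1 = c'.1 → c = c'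

/-- `λ/μ` is a rook strip: `μ ⊆ λ` and no two boxes of `λ/μ` share a row or a column. -/
def IsRookStrip (μ lam : YoungDiagram) : Prop :=
  μ ≤ lam ∧ ∀ c ∈ skewCells μ lam, ∀ c' ∈ skewCells μ lam, (c.1 = c'.1 ∨ c.2 = c'.2) → c = c'

/-- `I(μ)`: the set of removable boxes (inner corners) of `μ`. -/
def corners (μ : YoungDiagram) : Finset (ℕ × ℕ) :=
  μ.cells.filter fun c => (c.1 + 1, c.2) ∉ μ.cells ∧ (c.1, c.2 + 1) ∉ μ.cells

/-- `i(μ)`, the number of removable boxes (inner corners) of `μ`. -/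
def numCorners (μ : YoungDiagram) : ℕ := (corners μ).card

/-- The cells of the augmented shape `λ//μ = λ/μ ∪ I(μ)`. -/
def dShape (μ lam : YoungDiagram) : Finset (ℕ × ℕ) := skewCells μ lam ∪ corners μ

/-- `a(λ//μ)`: the number of columns of `λ//μ` that are not columns of `λ/μ`, i.e. the number
of "open" removable boxes of `μ` sharing no column with a box of `λ/μ`. -/
def openCount (μ lam : YoungDiagram) : ℕ :=
  ((corners μ).filter fun c => ∀ c' ∈ skewCells μ lam, c'.2 ≠ c.2).card
/-- Truncation `A_N(x) = (1 + x ũ_N)⋯(1 + x ũ_2)(1 + x ũ_1)` of the operator series `A(x)`,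
over a commutative ring `S` with distinguished elements `b` (the parameter `β`) and `x`. -/
def opA (S : Type*) [CommRing S] (b x : S) : ℕ → Module.End S (YoungDiagram →₀ S)
  | 0 => 1
  | N + 1 => (1 + x • utilde S b N) * opA S b x N

/-- Truncation `B_N(y) = (1 + y d̃_1)(1 + y d̃_2)⋯(1 + y d̃_N)` of the operator series `B(y)`,
over a commutative ring `S` with distinguished elements `b` (the parameter `β`) and `y`. -/
def opB (S : Type*) [CommRing S] (b y : S) : ℕ → Module.End S (YoungDiagram →₀ S)
  | 0 => 1
  | N + 1 => opB S b y N * (1 + y • dtilde S b N)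

/-- The operator `A(x_n) A(x_{n-1}) ⋯ A(x_1)` (truncated at level `N`) over the multivariate
polynomial ring `R[x_1, …, x_n]`, where `x_k` is the variable `MvPolynomial.X (k-1)`. -/
def opAseq (R : Type*) [CommRing R] (β : R) (n N : ℕ) :
    Module.End (MvPolynomial (Fin n) R) (YoungDiagram →₀ MvPolynomial (Fin n) R) :=
  ((List.ofFn fun k : Fin n =>
    opA (MvPolynomial (Fin n) R) (MvPolynomial.C β) (MvPolynomial.X k) N).reverse).prod

/-- The operator `B(x_n) B(x_{n-1}) ⋯ B(x_1)` (truncated at level `N`) over the multivariate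
polynomial ring `R[x_1, …, x_n]`, where `x_k` is the variable `MvPolynomial.X (k-1)`. -/
def opBseq (R : Type*) [CommRing R] (β : R) (n N : ℕ) :
    Module.End (MvPolynomial (Fin n) R) (YoungDiagram →₀ MvPolynomial (Fin n) R) :=
  ((List.ofFn fun k : Fin n =>
    opB (MvPolynomial (Fin n) R) (MvPolynomial.C β) (MvPolynomial.X k) N).reverse).prod

/-- A set-valued tableau of shape `λ//μ` with entries in `{1, …, n}` (entry `k ∈ {1,…,n}` is
encoded as `k-1 : Fin n`): boxes of `λ/μ` carry nonempty sets, boxes of `I(μ)` may be empty,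
and every choice of one element from each nonempty box is weakly increasing along rows and
strictly increasing down columns. -/
def IsSVT {n : ℕ} {μ lam : YoungDiagram} (T : ↥(dShape μ lam) → Finset (Fin n)) : Prop :=
  (∀ c : ↥(dShape μ lam), c.1 ∈ skewCells μ lam → (T c).Nonempty) ∧
  (∀ c c' : ↥(dShape μ lam), c.1.1 = c'.1.1 → c.1.2 < c'.1.2 →
    ∀ a ∈ T c, ∀ b ∈ T c', a ≤ b) ∧
  (∀ c c' : ↥(dShape μ lam), c.1.2 = c'.1.2 → c.1.1 < c'.1.1 →
    ∀ a ∈ T c, ∀ b ∈ T c', a < b)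

/-- `|T|`, the total number of entries of a set-valued tableau. -/
def svtSize {n : ℕ} {μ lam : YoungDiagram} (T : ↥(dShape μ lam) → Finset (Fin n)) : ℕ :=
  ∑ c, (T c).card

/-- The skew Grothendieck polynomial `G^β_{λ//μ}(x_1, …, x_n)`, defined combinatorially as
`Σ_T (-β)^{|T| - |λ/μ|} x^T` over set-valued tableaux `T` of shape `λ//μ` with entries
in `{1, …, n}`. -/
def Gsvt (R : Type*) [CommRing R] (β : R) (n : ℕ) (μ lam : YoungDiagram) :
    MvPolynomial (Fin n) R :=
  ∑ T ∈ Finset.univ.filter (IsSVT (n := n) (μ := μ) (lam := lam)),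
    (-β) ^ (svtSize T - skewSize μ lam) • ∏ c, ∏ k ∈ T c, MvPolynomial.X k

/-- A set-valued tableau of the pure skew shape `λ/μ` with entries in `{1, …, n}`:
all boxes carry nonempty sets; rows weakly increase and columns strictly increase. -/
def IsSVTPure {n : ℕ} {μ lam : YoungDiagram} (T : ↥(skewCells μ lam) → Finset (Fin n)) : Prop :=
  (∀ c : ↥(skewCells μ lam), (T c).Nonempty) ∧
  (∀ c c' : ↥(skewCells μ lam), c.1.1 = c'.1.1 → c.1.2 < c'.1.2 →
    ∀ a ∈ T c, ∀ b ∈ T c', a ≤ b) ∧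
  (∀ c c' : ↥(skewCells μ lam), c.1.2 = c'.1.2 → c.1.1 < c'.1.1 →
    ∀ a ∈ T c, ∀ b ∈ T c', a < b)

/-- The pure-skew Grothendieck polynomial `G^β_{λ/μ}(x_1, …, x_n)`, defined combinatorially
as `Σ_T (-β)^{|T| - |λ/μ|} x^T` over set-valued tableaux `T` of the skew shape `λ/μ`. -/
def GsvtPure (R : Type*) [CommRing R] (β : R) (n : ℕ) (μ lam : YoungDiagram) :
    MvPolynomial (Fin n) R :=
  ∑ T ∈ Finset.univ.filter (IsSVTPure (n := n) (μ := μ) (lam := lam)),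
    (-β) ^ ((∑ c, (T c).card) - skewSize μ lam) • ∏ c, ∏ k ∈ T c, MvPolynomial.X k

/-- A reverse plane partition of shape `λ/μ` with entries in `{1, …, n}` (entry `k` encoded as
`k-1 : Fin n`): entries weakly increase along rows and down columns. -/
def IsRPP {n : ℕ} {μ lam : YoungDiagram} (T : ↥(skewCells μ lam) → Fin n) : Prop :=
  (∀ c c' : ↥(skewCells μ lam), c.1.1 = c'.1.1 → c.1.2 ≤ c'.1.2 → T c ≤ T c') ∧
  (∀ c c' : ↥(skewCells μ lam), c.1.2 = c'.1.2 → c.1.1 ≤ c'.1.1 → T c ≤ T c')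

/-- `c_i(T)`: the number of columns of a reverse plane partition `T` containing the entry `i`. -/
def rppColCount {n : ℕ} {μ lam : YoungDiagram} (T : ↥(skewCells μ lam) → Fin n) (i : Fin n) :
    ℕ :=
  ((Finset.univ.filter fun c => T c = i).image fun c => c.1.2).card

/-- The dual skew Grothendieck polynomial `g^β_{λ/μ}(y_1, …, y_n)`, defined combinatorially as
`Σ_T β^{|λ/μ| - |T|} y^T` over reverse plane partitions `T` of shape `λ/μ` with entries in
`{1, …, n}`, where `y^T = ∏_i y_i^{c_i(T)}` and `|T| = Σ_i c_i(T)`. -/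
def grpp (R : Type*) [CommRing R] (β : R) (n : ℕ) (μ lam : YoungDiagram) :
    MvPolynomial (Fin n) R :=
  ∑ T ∈ Finset.univ.filter (IsRPP (n := n) (μ := μ) (lam := lam)),
    β ^ (skewSize μ lam - ∑ i, rppColCount T i) • ∏ i, MvPolynomial.X i ^ rppColCount T i

namespace SkewG
open YoungDiagram Finset

/-! ### Phase 0: adding and removing boxes -/

lemma yd_ext_colLen {μ ν : YoungDiagram} (h : ∀ j, μ.colLen j = ν.colLen j) : μ = ν := by
  ext ⟨i, j⟩
  simp only [YoungDiagram.mem_cells, YoungDiagram.mem_iff_lt_colLen, h]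

/-- One can add a box at the bottom of column `j`. -/
def CanAdd (ν : YoungDiagram) (j : ℕ) : Prop := ∀ j' < j, ν.colLen j < ν.colLen j'

/-- Column `j` has a removable box at its bottom. -/
def HasCorner (ν : YoungDiagram) (j : ℕ) : Prop := ν.colLen (j + 1) < ν.colLen j

/-- Add a box at the bottom of column `j`. -/
def addCell (ν : YoungDiagram) (j : ℕ) (h : CanAdd ν j) : YoungDiagram where
  cells := insert (ν.colLen j, j) ν.cells
  isLowerSet := by
    intro ⟨i2, j2⟩ ⟨i1, j1⟩ hle hmem
    simp only [Finset.coe_insert, Set.mem_insert_iff, Finset.mem_coe,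
      YoungDiagram.mem_cells] at hmem ⊢
    obtain ⟨h1, h2⟩ := Prod.mk_le_mk.mp hle
    rcases hmem with heq | hmem
    · rw [Prod.ext_iff] at heq
      dsimp at heq
      obtain ⟨rfl, rfl⟩ := heq
      rcases eq_or_lt_of_le h2 with rfl | hb
      · rcases eq_or_lt_of_le h1 with rfl | ha
        · exact Or.inl rfl
        · exact Or.inr (YoungDiagram.mem_iff_lt_colLen.mpr ha)
      · exact Or.inr (YoungDiagram.mem_iff_lt_colLen.mpr (lt_of_le_of_lt h1 (h j1 hb)))
    · exact Or.inr (ν.up_left_mem h1 h2 hmem)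

@[simp] lemma mem_addCell {ν : YoungDiagram} {j : ℕ} (h : CanAdd ν j) (c : ℕ × ℕ) :
    c ∈ addCell ν j h ↔ c = (ν.colLen j, j) ∨ c ∈ ν := by
  show c ∈ YoungDiagram.mk _ _ ↔ _
  exact Finset.mem_insert

lemma colLen_eq_of {μ : YoungDiagram} {j k : ℕ} (h : ∀ i, (i, j) ∈ μ ↔ i < k) :
    μ.colLen j = k := by
  refine le_antisymm ?_ ?_
  · by_contra hc
    push_neg at hc
    exact absurd ((h _).mp (YoungDiagram.mem_iff_lt_colLen.mpr hc)) (lt_irrefl k)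
  · rcases Nat.eq_zero_or_pos k with rfl | hk
    · exact Nat.zero_le _
    · exact Nat.le_of_pred_lt (YoungDiagram.mem_iff_lt_colLen.mp ((h _).mpr (Nat.pred_lt hk.ne')))

lemma colLen_addCell {ν : YoungDiagram} {j : ℕ} (h : CanAdd ν j) (j' : ℕ) :
    (addCell ν j h).colLen j' = if j' = j then ν.colLen j + 1 else ν.colLen j' := by
  refine colLen_eq_of fun i => ?_
  rw [mem_addCell, YoungDiagram.mem_iff_lt_colLen, Prod.ext_iff]
  split_ifs with hj
  · subst hj; omega
  · omega

/-- Remove the bottom box of column `j`. -/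
def delCell (ν : YoungDiagram) (j : ℕ) (h : HasCorner ν j) : YoungDiagram where
  cells := ν.cells.erase (ν.colLen j - 1, j)
  isLowerSet := by
    intro ⟨i2, j2⟩ ⟨i1, j1⟩ hle hmem
    simp only [Finset.coe_erase, Set.mem_diff, Finset.mem_coe, YoungDiagram.mem_cells,
      Set.mem_singleton_iff] at hmem ⊢
    obtain ⟨h1, h2⟩ := Prod.mk_le_mk.mp hle
    obtain ⟨hmem, hne⟩ := hmem
    refine ⟨ν.up_left_mem h1 h2 hmem, ?_⟩
    intro heq
    rw [Prod.ext_iff] at heq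
    dsimp at heq
    obtain ⟨ha, rfl⟩ := heq
    subst ha
    have hi : i2 < ν.colLen j2 := YoungDiagram.mem_iff_lt_colLen.mp hmem
    have hcol : ν.colLen j2 ≤ ν.colLen j1 := ν.colLen_anti _ _ h2
    have hc : ν.colLen (j1 + 1) < ν.colLen j1 := h
    have hj2 : j2 = j1 := by
      by_contra hne2
      have : ν.colLen j2 ≤ ν.colLen (j1 + 1) := ν.colLen_anti _ _ (by omega)
      omega
    subst hj2
    exact hne (by rw [Prod.ext_iff]; exact ⟨by dsimp; omega, rfl⟩)

@[simp] lemma mem_delCell {ν : YoungDiagram} {j : ℕ} (h : HasCorner ν j) (c : ℕ × ℕ) :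
    c ∈ delCell ν j h ↔ c ∈ ν ∧ c ≠ (ν.colLen j - 1, j) := by
  show c ∈ YoungDiagram.mk _ _ ↔ _
  exact Finset.mem_erase.trans and_comm

lemma colLen_delCell {ν : YoungDiagram} {j : ℕ} (h : HasCorner ν j) (j' : ℕ) :
    (delCell ν j h).colLen j' = if j' = j then ν.colLen j - 1 else ν.colLen j' := by
  have hc : ν.colLen (j + 1) < ν.colLen j := h
  refine colLen_eq_of fun i => ?_
  rw [mem_delCell, YoungDiagram.mem_iff_lt_colLen, ne_eq, Prod.ext_iff]
  split_ifs with hj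
  · subst hj; omega
  · omega

lemma canAdd_delCell {ν : YoungDiagram} {j : ℕ} (h : HasCorner ν j) :
    CanAdd (delCell ν j h) j := by
  intro j' hj'
  have h1 : ν.colLen j ≤ ν.colLen j' := ν.colLen_anti _ _ (by omega)
  have hc : ν.colLen (j + 1) < ν.colLen j := h
  rw [colLen_delCell h, colLen_delCell h, if_pos rfl, if_neg (by omega)]
  omega

lemma hasCorner_addCell {ν : YoungDiagram} {j : ℕ} (h : CanAdd ν j) :
    HasCorner (addCell ν j h) j := by
  have := ν.colLen_anti j (j + 1) (by omega)
  show (addCell ν j h).colLen (j + 1) < (addCell ν j h).colLen j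
  rw [colLen_addCell h, colLen_addCell h, if_pos rfl, if_neg (by omega)]
  omega

lemma addCell_delCell {ν : YoungDiagram} {j : ℕ} (h : HasCorner ν j) :
    addCell (delCell ν j h) j (canAdd_delCell h) = ν := by
  apply yd_ext_colLen
  intro j'
  have hc : ν.colLen (j + 1) < ν.colLen j := h
  simp only [colLen_addCell (canAdd_delCell h), colLen_delCell h]
  split_ifs with hj
  · subst hj; omega
  · rfl

lemma delCell_addCell {ν : YoungDiagram} {j : ℕ} (h : CanAdd ν j) :
    delCell (addCell ν j h) j (hasCorner_addCell h) = ν := by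
  apply yd_ext_colLen
  intro j'
  simp only [colLen_delCell (hasCorner_addCell h), colLen_addCell h]
  split_ifs with hj
  · subst hj; simp
  · rfl

lemma exists_add_iff (ν : YoungDiagram) (j : ℕ) :
    (∃ lam : YoungDiagram, lam.cells = insert (ν.colLen j, j) ν.cells) ↔ CanAdd ν j := by
  constructor
  · rintro ⟨lam, hlam⟩ j' hj'
    have hmem : (ν.colLen j, j) ∈ lam := by
      rw [← YoungDiagram.mem_cells, hlam]; exact Finset.mem_insert_self _ _
    have hmem' : (ν.colLen j, j') ∈ lam := lam.up_left_mem le_rfl (le_of_lt hj') hmem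
    rw [← YoungDiagram.mem_cells, hlam, Finset.mem_insert] at hmem'
    rcases hmem' with heq | hmem'
    · exfalso; rw [Prod.ext_iff] at heq; have := heq.2; dsimp at this; omega
    · exact YoungDiagram.mem_iff_lt_colLen.mp hmem'
  · intro h
    exact ⟨addCell ν j h, rfl⟩

lemma exists_del_iff (ν : YoungDiagram) (j : ℕ) :
    (∃ μ : YoungDiagram, ν.cells = insert (μ.colLen j, j) μ.cells) ↔ HasCorner ν j := by
  constructor
  · rintro ⟨μ, hμ⟩
    have hca : CanAdd μ j := (exists_add_iff μ j).mp ⟨ν, hμ⟩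
    have hν : ν = addCell μ j hca := YoungDiagram.ext hμ
    rw [hν]
    exact hasCorner_addCell hca
  · intro h
    have hc : ν.colLen (j + 1) < ν.colLen j := h
    refine ⟨delCell ν j h, ?_⟩
    have h1 : (delCell ν j h).colLen j = ν.colLen j - 1 := by
      rw [colLen_delCell h, if_pos rfl]
    rw [h1]
    show ν.cells = insert _ (Finset.erase _ _)
    rw [Finset.insert_erase]
    show (ν.colLen j - 1, j) ∈ ν
    rw [YoungDiagram.mem_iff_lt_colLen]
    omega

end SkewG
namespace SkewG
open YoungDiagram Finset

/-! ### Phase 1: evaluating `opA` on a basis vector -/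

lemma delCell_eq_of {ν μ : YoungDiagram} {j : ℕ}
    (hμ : ν.cells = insert (μ.colLen j, j) μ.cells) (h : HasCorner ν j) :
    delCell ν j h = μ := by
  have hca : CanAdd μ j := (exists_add_iff μ j).mp ⟨ν, hμ⟩
  have hν : ν = addCell μ j hca := YoungDiagram.ext hμ
  subst hν
  exact delCell_addCell hca

lemma lift_single {S : Type*} [CommRing S] {M : Type*} [AddCommMonoid M] [Module S M]
    (f : YoungDiagram → M) (x : YoungDiagram) :
    Finsupp.lift M S YoungDiagram f (Finsupp.single x (1 : S)) = f x := by
  rw [Finsupp.lift_apply, Finsupp.sum_single_index (by simp), one_smul]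

lemma schurU_single {S : Type*} [CommRing S] (j : ℕ) (ν : YoungDiagram) :
    schurU S j (Finsupp.single ν 1) =
      if h : CanAdd ν j then Finsupp.single (addCell ν j h) 1 else 0 := by
  show Finsupp.lift _ _ _ _ _ = _
  rw [lift_single]
  by_cases h : CanAdd ν j
  · rw [dif_pos ((exists_add_iff ν j).mpr h), dif_pos h]
    congr 1
    have hs := ((exists_add_iff ν j).mpr h).choose_spec
    exact YoungDiagram.ext hs
  · rw [dif_neg, dif_neg h]
    rw [exists_add_iff]
    exact h

lemma schurD_single {S : Type*} [CommRing S] (j : ℕ) (ν : YoungDiagram) :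
    schurD S j (Finsupp.single ν 1) =
      if h : HasCorner ν j then Finsupp.single (delCell ν j h) 1 else 0 := by
  show Finsupp.lift _ _ _ _ _ = _
  rw [lift_single]
  by_cases h : HasCorner ν j
  · rw [dif_pos ((exists_del_iff ν j).mpr h), dif_pos h]
    congr 1
    have hs := ((exists_del_iff ν j).mpr h).choose_spec
    exact (delCell_eq_of hs h).symm
  · rw [dif_neg, dif_neg h]
    rw [exists_del_iff]
    exact h

lemma end_apply {S : Type*} [CommRing S] (f : Module.End S (YoungDiagram →₀ S))
    (w : YoungDiagram →₀ S) (ν : YoungDiagram) :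
    f w ν = ∑ ρ ∈ w.support, w ρ * f (Finsupp.single ρ 1) ν := by
  conv_lhs => rw [← Finsupp.sum_single w, Finsupp.sum, map_sum]
  rw [Finsupp.finset_sum_apply]
  refine Finset.sum_congr rfl fun ρ _ => ?_
  rw [← Finsupp.smul_single_one, map_smul, Finsupp.smul_apply, smul_eq_mul]

lemma schurU_apply {S : Type*} [CommRing S] (j : ℕ) (w : YoungDiagram →₀ S)
    (lam : YoungDiagram) :
    schurU S j w lam = if h : HasCorner lam j then w (delCell lam j h) else 0 := by
  rw [end_apply]
  by_cases h : HasCorner lam j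
  · rw [dif_pos h]
    have key : ∀ ρ : YoungDiagram, (schurU S j (Finsupp.single ρ 1) : YoungDiagram →₀ S) lam
        = if ρ = delCell lam j h then 1 else 0 := by
      intro ρ
      rw [schurU_single]
      by_cases hc : CanAdd ρ j
      · rw [dif_pos hc, Finsupp.single_apply]
        congr 1
        apply propext
        constructor
        · rintro rfl
          rw [delCell_addCell]
        · rintro rfl
          rw [addCell_delCell]
      · rw [dif_neg hc, Finsupp.coe_zero, Pi.zero_apply, if_neg]
        rintro rfl
        exact hc (canAdd_delCell h)
    simp only [key, mul_ite, mul_one, mul_zero, Finset.sum_ite_eq' w.support]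
    split_ifs with hs
    · rfl
    · exact (Finsupp.notMem_support_iff.mp hs).symm
  · rw [dif_neg h]
    refine Finset.sum_eq_zero fun ρ _ => ?_
    rw [schurU_single]
    by_cases hc : CanAdd ρ j
    · rw [dif_pos hc, Finsupp.single_apply, if_neg, mul_zero]
      intro heq
      exact h (heq ▸ hasCorner_addCell hc)
    · rw [dif_neg hc, Finsupp.coe_zero, Pi.zero_apply, mul_zero]

lemma schurD_apply {S : Type*} [CommRing S] (j : ℕ) (w : YoungDiagram →₀ S)
    (μ' : YoungDiagram) :
    schurD S j w μ' = if h : CanAdd μ' j then w (addCell μ' j h) else 0 := by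
  rw [end_apply]
  by_cases h : CanAdd μ' j
  · rw [dif_pos h]
    have key : ∀ ρ : YoungDiagram, (schurD S j (Finsupp.single ρ 1) : YoungDiagram →₀ S) μ'
        = if ρ = addCell μ' j h then 1 else 0 := by
      intro ρ
      rw [schurD_single]
      by_cases hc : HasCorner ρ j
      · rw [dif_pos hc, Finsupp.single_apply]
        congr 1
        apply propext
        constructor
        · rintro rfl
          rw [addCell_delCell]
        · rintro rfl
          rw [delCell_addCell]
      · rw [dif_neg hc, Finsupp.coe_zero, Pi.zero_apply, if_neg]
        rintro rfl
        exact hc (hasCorner_addCell h)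
    simp only [key, mul_ite, mul_one, mul_zero, Finset.sum_ite_eq' w.support]
    split_ifs with hs
    · rfl
    · exact (Finsupp.notMem_support_iff.mp hs).symm
  · rw [dif_neg h]
    refine Finset.sum_eq_zero fun ρ _ => ?_
    rw [schurD_single]
    by_cases hc : HasCorner ρ j
    · rw [dif_pos hc, Finsupp.single_apply, if_neg, mul_zero]
      intro heq
      exact h (heq ▸ canAdd_delCell hc)
    · rw [dif_neg hc, Finsupp.coe_zero, Pi.zero_apply, mul_zero]

/-- Horizontal strip condition supported in columns `< N`. -/
def HStripN (N : ℕ) (ν lam : YoungDiagram) : Prop :=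
  (∀ j, ν.colLen j ≤ lam.colLen j ∧ lam.colLen j ≤ ν.colLen j + 1) ∧
  ∀ j, N ≤ j → lam.colLen j = ν.colLen j

def addedN (N : ℕ) (ν lam : YoungDiagram) : ℕ :=
  ∑ j ∈ Finset.range N, (lam.colLen j - ν.colLen j)

def openN (N : ℕ) (ν lam : YoungDiagram) : ℕ :=
  ((Finset.range N).filter fun j =>
    lam.colLen j = ν.colLen j ∧ ν.colLen (j + 1) < ν.colLen j).card

def passCoeff (S : Type*) [CommRing S] (b x : S) (N : ℕ) (ν lam : YoungDiagram) : S :=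
  if HStripN N ν lam then x ^ addedN N ν lam * (1 - b * x) ^ openN N ν lam else 0

lemma hstrip_mono {N : ℕ} {ν lam : YoungDiagram} (h : HStripN N ν lam) :
    HStripN (N + 1) ν lam :=
  ⟨h.1, fun j hj => h.2 j (by omega)⟩

lemma pass_step (S : Type*) [CommRing S] (b x : S) (N : ℕ) (ν lam : YoungDiagram) :
    passCoeff S b x N ν lam
      + x * ((if h : HasCorner lam N then passCoeff S b x N ν (delCell lam N h) else 0)
             - b * (if HasCorner lam N then passCoeff S b x N ν lam else 0))
    = passCoeff S b x (N + 1) ν lam := by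
  by_cases hcor : HasCorner lam N
  case neg =>
    rw [dif_neg hcor, if_neg hcor, mul_zero, sub_zero, mul_zero, add_zero]
    have hiff : HStripN (N + 1) ν lam ↔ HStripN N ν lam := by
      constructor
      · rintro ⟨hA, hB⟩
        refine ⟨hA, fun j hj => ?_⟩
        rcases Nat.lt_or_ge j (N + 1) with hj' | hj'
        · have hjN : j = N := by omega
          subst hjN
          have h1 : lam.colLen (j + 1) = ν.colLen (j + 1) := hB _ (by omega)
          have h2 : ν.colLen (j + 1) ≤ ν.colLen j := ν.colLen_anti _ _ (by omega)
          have h3 : ν.colLen j ≤ lam.colLen j := (hA j).1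
          have h4 : ¬ lam.colLen (j + 1) < lam.colLen j := hcor
          omega
        · exact hB j hj'
      · exact hstrip_mono
    by_cases hS : HStripN N ν lam
    · have hclN : lam.colLen N = ν.colLen N := hS.2 N le_rfl
      have h1 : addedN (N + 1) ν lam = addedN N ν lam := by
        rw [addedN, Finset.sum_range_succ, hclN]
        simp [addedN]
      have h2 : openN (N + 1) ν lam = openN N ν lam := by
        rw [openN, Finset.range_add_one, Finset.filter_insert, if_neg, ← openN]
        rintro ⟨-, hlt⟩
        have h3 : lam.colLen (N + 1) = ν.colLen (N + 1) := hS.2 _ (by omega)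
        have h4 : ¬ lam.colLen (N + 1) < lam.colLen N := hcor
        omega
      rw [passCoeff, passCoeff, if_pos hS, if_pos (hiff.mpr hS), h1, h2]
    · rw [passCoeff, passCoeff, if_neg hS, if_neg (fun hc => hS (hiff.mp hc))]
  case pos =>
    have hcor' : lam.colLen (N + 1) < lam.colLen N := hcor
    rw [dif_pos hcor, if_pos hcor]
    set ρ := delCell lam N hcor with hρ
    have hρcol : ∀ j, ρ.colLen j = if j = N then lam.colLen N - 1 else lam.colLen j :=
      colLen_delCell hcor
    by_cases hS1 : HStripN (N + 1) ν lam
    case pos =>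
      obtain ⟨hA, hB⟩ := hS1
      have h5 := hA N
      rcases Nat.lt_or_ge (ν.colLen N) (lam.colLen N) with hcase | hcase
      · -- added a box in column N : lam.colLen N = ν.colLen N + 1
        have hclN : lam.colLen N = ν.colLen N + 1 := by omega
        have hP0 : passCoeff S b x N ν lam = 0 := by
          rw [passCoeff, if_neg]
          rintro ⟨-, hB'⟩
          have := hB' N le_rfl
          omega
        have hSρ : HStripN N ν ρ := by
          constructor
          · intro j
            rw [hρcol j]
            split_ifs with hj
            · subst hj; omega
            · exact hA j
          · intro j hj
            rw [hρcol j]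
            split_ifs with hj'
            · subst hj'; omega
            · exact hB j (by omega)
        have hadd : addedN (N + 1) ν lam = addedN N ν ρ + 1 := by
          rw [addedN, Finset.sum_range_succ, hclN, addedN]
          congr 1
          · refine Finset.sum_congr rfl fun j hj => ?_
            rw [hρcol j, if_neg]
            exact fun h => by rw [h] at hj; exact absurd (Finset.mem_range.mp hj) (lt_irrefl N)
          · omega
        have hopen : openN (N + 1) ν lam = openN N ν ρ := by
          rw [openN, Finset.range_add_one, Finset.filter_insert, if_neg (by omega), openN]
          congr 1
          refine Finset.filter_congr fun j hj => ?_
          rw [hρcol j, if_neg]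
          exact fun h => by rw [h] at hj; exact absurd (Finset.mem_range.mp hj) (lt_irrefl N)
        rw [hP0, passCoeff, if_pos hSρ, passCoeff, if_pos ⟨hA, hB⟩, hadd, hopen]
        ring
      · -- no box added in column N : lam.colLen N = ν.colLen N
        have hclN : lam.colLen N = ν.colLen N := by omega
        have hS : HStripN N ν lam := by
          refine ⟨hA, fun j hj => ?_⟩
          rcases Nat.eq_or_lt_of_le hj with rfl | hj'
          · exact hclN
          · exact hB j (by omega)
        have hPρ : passCoeff S b x N ν ρ = 0 := by
          rw [passCoeff, if_neg]
          rintro ⟨hA', -⟩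
          have := (hA' N).1
          rw [hρcol N, if_pos rfl] at this
          omega
        have hadd : addedN (N + 1) ν lam = addedN N ν lam := by
          rw [addedN, Finset.sum_range_succ, hclN, addedN]
          omega
        have hcond : lam.colLen N = ν.colLen N ∧ ν.colLen (N + 1) < ν.colLen N :=
          ⟨hclN, by have := hB (N + 1) le_rfl; omega⟩
        have hopen : openN (N + 1) ν lam = openN N ν lam + 1 := by
          rw [openN, Finset.range_add_one, Finset.filter_insert, if_pos hcond,
            Finset.card_insert_of_notMem (fun hmem =>
              absurd (Finset.mem_range.mp (Finset.mem_filter.mp hmem).1) (lt_irrefl N)), ← openN]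
        rw [hPρ, passCoeff, if_pos hS, passCoeff, if_pos ⟨hA, hB⟩, hadd, hopen, pow_succ]
        ring
    case neg =>
      have hP1 : passCoeff S b x N ν lam = 0 := by
        rw [passCoeff, if_neg]
        exact fun hc => hS1 (hstrip_mono hc)
      have hP2 : passCoeff S b x N ν ρ = 0 := by
        rw [passCoeff, if_neg]
        rintro ⟨hA', hB'⟩
        apply hS1
        have hclN : lam.colLen N = ν.colLen N + 1 := by
          have h1 := hB' N le_rfl
          rw [hρcol N, if_pos rfl] at h1
          have h2 := (hA' N).1
          rw [hρcol N, if_pos rfl] at h2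
          omega
        constructor
        · intro j
          have := hA' j
          rw [hρcol j] at this
          split_ifs at this with hj
          · subst hj; omega
          · exact this
        · intro j hj
          have := hB' j (by omega)
          rw [hρcol j, if_neg (by omega)] at this
          exact this
      rw [hP1, hP2, passCoeff, if_neg hS1]
      ring

theorem opA_single {S : Type*} [CommRing S] (b x : S) (N : ℕ) (ν lam : YoungDiagram) :
    (opA S b x N (Finsupp.single ν 1) : YoungDiagram →₀ S) lam = passCoeff S b x N ν lam := by
  induction N generalizing lam with
  | zero =>
    have h0 : opA S b x 0 = 1 := rfl
    rw [h0, Module.End.one_apply, Finsupp.single_apply, passCoeff]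
    by_cases h : ν = lam
    · subst h
      rw [if_pos rfl, if_pos ⟨fun j => ⟨le_rfl, by omega⟩, fun j _ => rfl⟩]
      simp [addedN, openN]
    · rw [if_neg h, if_neg]
      rintro ⟨hA, hB⟩
      exact h (yd_ext_colLen fun j => (hB j (by omega)).symm)
  | succ N ih =>
    have hop : opA S b x (N + 1) = (1 + x • utilde S b N) * opA S b x N := rfl
    rw [hop, Module.End.mul_apply]
    set v := opA S b x N (Finsupp.single ν 1) with hv
    have hexp : ((1 + x • utilde S b N) v : YoungDiagram →₀ S) lam
        = v lam + x * ((schurU S N v) lam - b * (schurU S N (schurD S N v)) lam) := by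
      simp [utilde, LinearMap.add_apply, LinearMap.smul_apply, LinearMap.sub_apply,
        Module.End.mul_apply, Finsupp.add_apply, Finsupp.smul_apply, Finsupp.sub_apply,
        smul_eq_mul, mul_sub]
    rw [hexp]
    have hD : (schurU S N (schurD S N v) : YoungDiagram →₀ S) lam
        = if HasCorner lam N then v lam else 0 := by
      rw [schurU_apply]
      split_ifs with h
      · rw [schurD_apply, dif_pos (canAdd_delCell h), addCell_delCell]
      · rfl
    rw [hD, schurU_apply]
    simp only [hv, ih]
    have := pass_step S b x N ν lam
    simp only [← ih] at this
    exact this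

end SkewG
namespace SkewG
open YoungDiagram Finset

/-! ### Phase 2: reduction of the main theorem to the key combinatorial identity -/

lemma le_of_colLen_le {ρ ν : YoungDiagram} (h : ∀ j, ρ.colLen j ≤ ν.colLen j) : ρ ≤ ν := by
  rw [← YoungDiagram.cells_subset_iff]
  intro c hc
  rw [YoungDiagram.mem_cells, YoungDiagram.mem_iff_lt_colLen] at hc ⊢
  exact lt_of_lt_of_le hc (h c.2)

lemma colLen_le_of_le {ρ ν : YoungDiagram} (h : ρ ≤ ν) (j : ℕ) : ρ.colLen j ≤ ν.colLen j := by
  by_cases h0 : ρ.colLen j = 0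
  · omega
  · have : (ρ.colLen j - 1, j) ∈ ρ := YoungDiagram.mem_iff_lt_colLen.mpr (by omega)
    have h2 : (ρ.colLen j - 1, j) ∈ ν := h this
    have := YoungDiagram.mem_iff_lt_colLen.mp h2
    omega

lemma rowLen_le_of_le {ρ ν : YoungDiagram} (h : ρ ≤ ν) (i : ℕ) : ρ.rowLen i ≤ ν.rowLen i := by
  by_cases h0 : ρ.rowLen i = 0
  · omega
  · have : (i, ρ.rowLen i - 1) ∈ ρ := YoungDiagram.mem_iff_lt_rowLen.mpr (by omega)
    have h2 := YoungDiagram.mem_iff_lt_rowLen.mp (h this)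
    omega

lemma colLen_eq_zero_of {ν : YoungDiagram} {N j : ℕ} (hN : ν.rowLen 0 ≤ N) (hj : N ≤ j) :
    ν.colLen j = 0 := by
  by_contra h0
  have : (0, j) ∈ ν := YoungDiagram.mem_iff_lt_colLen.mpr (by omega)
  have := YoungDiagram.mem_iff_lt_rowLen.mp this
  omega

/-- The `G`-polynomial restricted to set-valued tableaux with all entries `< m`. -/
def GsvtLe (R : Type*) [CommRing R] (β : R) (n m : ℕ) (μ lam : YoungDiagram) :
    MvPolynomial (Fin n) R :=
  ∑ T ∈ Finset.univ.filter (fun T => IsSVT (n := n) (μ := μ) (lam := lam) T ∧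
      ∀ c, ∀ k ∈ T c, (k : ℕ) < m),
    (-β) ^ (svtSize T - skewSize μ lam) • ∏ c, ∏ k ∈ T c, MvPolynomial.X k

lemma GsvtLe_top (R : Type*) [CommRing R] (β : R) (n : ℕ) (μ lam : YoungDiagram) :
    GsvtLe R β n n μ lam = Gsvt R β n μ lam := by
  rw [GsvtLe, Gsvt]
  congr 1
  refine Finset.filter_congr fun T _ => ?_
  simp only [and_iff_left_iff_imp]
  exact fun _ c k _ => k.isLt

lemma GsvtLe_zero (R : Type*) [CommRing R] (β : R) (n : ℕ) (μ ν : YoungDiagram)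
    (hμν : μ ≤ ν) :
    GsvtLe R β n 0 μ ν = if μ = ν then 1 else 0 := by
  rw [GsvtLe]
  by_cases h : μ = ν
  · subst h
    rw [if_pos rfl]
    have hempty : skewCells μ μ = ∅ := by
      rw [skewCells, Finset.sdiff_self]
    have hfilter : (Finset.univ.filter (fun T : ↥(dShape μ μ) → Finset (Fin n) =>
        IsSVT T ∧ ∀ c, ∀ k ∈ T c, (k : ℕ) < 0)) = {fun _ => ∅} := by
      ext T
      simp only [Finset.mem_filter, Finset.mem_univ, true_and, Finset.mem_singleton]
      constructor
      · rintro ⟨-, h2⟩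
        funext c
        rw [Finset.eq_empty_iff_forall_notMem]
        intro k hk
        exact absurd (h2 c k hk) (by omega)
      · rintro rfl
        refine ⟨⟨?_, ?_, ?_⟩, ?_⟩
        · intro c hc
          rw [hempty] at hc
          exact absurd hc (Finset.notMem_empty _)
        · intro c c' _ _ a ha
          exact absurd ha (Finset.notMem_empty _)
        · intro c c' _ _ a ha
          exact absurd ha (Finset.notMem_empty _)
        · intro c k hk
          exact absurd hk (Finset.notMem_empty _)
    rw [hfilter, Finset.sum_singleton]
    have h1 : svtSize (n := n) (μ := μ) (lam := μ) (fun _ => ∅) = 0 := by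
      simp [svtSize]
    rw [h1]
    have h2 : skewSize μ μ = 0 := by simp [skewSize, hempty]
    rw [h2]
    simp
  · rw [if_neg h]
    have hne : (skewCells μ ν).Nonempty := by
      rw [skewCells, Finset.sdiff_nonempty]
      intro hsub
      exact h (le_antisymm hμν hsub)
    obtain ⟨c, hc⟩ := hne
    refine Finset.sum_eq_zero fun T hT => ?_
    rw [Finset.mem_filter] at hT
    obtain ⟨-, hsvt, hlt⟩ := hT
    have hcd : c ∈ dShape μ ν := Finset.mem_union_left _ hc
    obtain ⟨k, hk⟩ := hsvt.1 ⟨c, hcd⟩ hc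
    exact absurd (hlt _ k hk) (by omega)

/-- All sub-Young-diagrams of `ν`, as a finset. -/
def subDiagrams (ν : YoungDiagram) : Finset YoungDiagram :=
  ν.cells.powerset.image fun s =>
    if h : ∃ d : YoungDiagram, d.cells = s then h.choose else ⊥

lemma mem_subDiagrams_of_le {ρ ν : YoungDiagram} (h : ρ ≤ ν) : ρ ∈ subDiagrams ν := by
  refine Finset.mem_image.mpr ⟨ρ.cells, Finset.mem_powerset.mpr (cells_subset_iff.mpr h), ?_⟩
  rw [dif_pos ⟨ρ, rfl⟩]
  exact YoungDiagram.ext (⟨ρ, rfl⟩ : ∃ d : YoungDiagram, d.cells = ρ.cells).choose_spec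

lemma passCoeff_le {S : Type*} [CommRing S] {b x : S} {N : ℕ} {ρ ν : YoungDiagram}
    (h : ¬ ρ ≤ ν) : passCoeff S b x N ρ ν = 0 := by
  rw [passCoeff, if_neg]
  rintro ⟨hA, -⟩
  exact h (le_of_colLen_le fun j => (hA j).1)

end SkewG
namespace SkewG
open YoungDiagram Finset

/-! ### Phase 3: the key combinatorial identity -/

variable {M : Type*} [AddCommMonoid M] {M' : Type*} [CommMonoid M']

lemma sum_subtype_eq {α : Type*} {s : Finset α} (g : ↥s → M) (f : α → M)
    (hf : ∀ (c) (h : c ∈ s), f c = g ⟨c, h⟩) : ∑ c : ↥s, g c = ∑ c ∈ s, f c := by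
  rw [← Finset.sum_attach s f, Finset.univ_eq_attach]
  exact Finset.sum_congr rfl fun c _ => (hf c.1 c.2).symm

lemma prod_subtype_eq {α : Type*} {s : Finset α} (g : ↥s → M') (f : α → M')
    (hf : ∀ (c) (h : c ∈ s), f c = g ⟨c, h⟩) : ∏ c : ↥s, g c = ∏ c ∈ s, f c := by
  rw [← Finset.prod_attach s f, Finset.univ_eq_attach]
  exact Finset.prod_congr rfl fun c _ => (hf c.1 c.2).symm

lemma mem_skewCells {μ lam : YoungDiagram} {c : ℕ × ℕ} :
    c ∈ skewCells μ lam ↔ c ∈ lam ∧ c ∉ μ := by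
  rw [skewCells, Finset.mem_sdiff, YoungDiagram.mem_cells, YoungDiagram.mem_cells]

lemma mem_corners' {μ : YoungDiagram} {c : ℕ × ℕ} :
    c ∈ corners μ ↔ c ∈ μ ∧ (c.1 + 1, c.2) ∉ μ ∧ (c.1, c.2 + 1) ∉ μ := by
  rw [corners, Finset.mem_filter, YoungDiagram.mem_cells]
  exact Iff.rfl

lemma mem_dShape {μ lam : YoungDiagram} {c : ℕ × ℕ} :
    c ∈ dShape μ lam ↔ c ∈ skewCells μ lam ∨ c ∈ corners μ := Finset.mem_union

lemma corners_subset {μ : YoungDiagram} : corners μ ⊆ μ.cells :=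
  Finset.filter_subset _ _

lemma dShape_subset_dShape {μ ρ ν : YoungDiagram} (hρν : ρ ≤ ν) :
    dShape μ ρ ⊆ dShape μ ν := by
  intro c hc
  rw [mem_dShape] at hc ⊢
  rcases hc with hc | hc
  · rw [mem_skewCells] at hc
    exact Or.inl (mem_skewCells.mpr ⟨hρν hc.1, hc.2⟩)
  · exact Or.inr hc

lemma mem_dShape_of_mem_sub {μ ρ ν : YoungDiagram} (hμρ : μ ≤ ρ) (hρν : ρ ≤ ν)
    {c : ℕ × ℕ} (hc : c ∈ ρ) (hcor : (c.1 + 1, c.2) ∉ ρ ∧ (c.1, c.2 + 1) ∉ ρ) :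
    c ∈ dShape μ ν := by
  rw [mem_dShape]
  by_cases hμ : c ∈ μ
  · exact Or.inr (mem_corners'.mpr ⟨hμ, fun h => hcor.1 (hμρ h), fun h => hcor.2 (hμρ h)⟩)
  · exact Or.inl (mem_skewCells.mpr ⟨hρν hc, hμ⟩)

/-- Open corners of `ρ` relative to `ν`: removable boxes of `ρ` sharing no column
with a box of `ν/ρ`. -/
def openCors (ρ ν : YoungDiagram) : Finset (ℕ × ℕ) :=
  (corners ρ).filter fun c => ∀ c' ∈ skewCells ρ ν, c'.2 ≠ c.2

lemma openCors_subset_dShape {μ ρ ν : YoungDiagram} (hμρ : μ ≤ ρ) (hρν : ρ ≤ ν) :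
    openCors ρ ν ⊆ dShape μ ν := by
  intro c hc
  obtain ⟨hc1, hc2, hc3⟩ := mem_corners'.mp (Finset.mem_filter.mp hc).1
  exact mem_dShape_of_mem_sub hμρ hρν hc1 ⟨hc2, hc3⟩

lemma col_lt_of_pos {ν : YoungDiagram} {N j : ℕ} (hN : ν.rowLen 0 ≤ N)
    (h : 0 < ν.colLen j) : j < N := by
  have h1 : (0, j) ∈ ν := YoungDiagram.mem_iff_lt_colLen.mpr h
  have := YoungDiagram.mem_iff_lt_rowLen.mp h1
  omega

lemma bridgeAdd {ρ ν : YoungDiagram} (hρν : ρ ≤ ν) {N : ℕ} (hN : ν.rowLen 0 ≤ N) :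
    addedN N ρ ν = skewSize ρ ν := by
  have hdisj : (↑(Finset.range N : Finset ℕ) : Set ℕ).PairwiseDisjoint
      (fun j => ν.col j \ ρ.col j) := by
    intro a _ b _ hab
    simp only [Finset.disjoint_left]
    intro c hc hc'
    rw [Finset.mem_sdiff, YoungDiagram.mem_col_iff] at hc hc'
    exact hab (hc.1.2 ▸ hc'.1.2.symm ▸ rfl)
  have hset : skewCells ρ ν = (Finset.range N).biUnion fun j => ν.col j \ ρ.col j := by
    ext c
    rw [mem_skewCells, Finset.mem_biUnion]
    constructor
    · rintro ⟨h1, h2⟩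
      refine ⟨c.2, Finset.mem_range.mpr ?_, ?_⟩
      · exact col_lt_of_pos hN (by
          have := YoungDiagram.mem_iff_lt_colLen.mp (show (c.1, c.2) ∈ ν from h1)
          omega)
      · rw [Finset.mem_sdiff, YoungDiagram.mem_col_iff, YoungDiagram.mem_col_iff]
        exact ⟨⟨h1, rfl⟩, fun hc => h2 hc.1⟩
    · rintro ⟨j, -, hj⟩
      rw [Finset.mem_sdiff, YoungDiagram.mem_col_iff] at hj
      exact ⟨hj.1.1, fun hc => hj.2 (YoungDiagram.mem_col_iff.mpr ⟨hc, hj.1.2⟩)⟩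
  rw [skewSize, hset, Finset.card_biUnion (fun a ha b hb hab => hdisj ha hb hab), addedN]
  refine Finset.sum_congr rfl fun j _ => ?_
  have hsub : ρ.col j ⊆ ν.col j := by
    intro c hc
    rw [YoungDiagram.mem_col_iff] at hc ⊢
    exact ⟨hρν hc.1, hc.2⟩
  rw [Finset.card_sdiff_of_subset hsub, ← YoungDiagram.colLen_eq_card, ← YoungDiagram.colLen_eq_card]

lemma skew_col_empty_iff {ρ ν : YoungDiagram} (hρν : ρ ≤ ν) {j : ℕ} :
    (∀ c' ∈ skewCells ρ ν, c'.2 ≠ j) ↔ ν.colLen j = ρ.colLen j := by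
  constructor
  · intro h
    by_contra hne
    have hlt : ρ.colLen j < ν.colLen j := by
      have := colLen_le_of_le hρν j
      omega
    exact h (ρ.colLen j, j) (mem_skewCells.mpr
      ⟨YoungDiagram.mem_iff_lt_colLen.mpr hlt,
       fun hc => absurd (YoungDiagram.mem_iff_lt_colLen.mp hc) (by omega)⟩) rfl
  · rintro h ⟨i, j2⟩ hc' hcol
    dsimp at hcol
    subst hcol
    rw [mem_skewCells] at hc'
    have h1 := YoungDiagram.mem_iff_lt_colLen.mp hc'.1
    have h2 : ¬ i < ρ.colLen j2 := fun hlt =>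
      hc'.2 (YoungDiagram.mem_iff_lt_colLen.mpr hlt)
    omega

lemma mem_openCors_iff {ρ ν : YoungDiagram} (hρν : ρ ≤ ν) {c : ℕ × ℕ} :
    c ∈ openCors ρ ν ↔
      ρ.colLen c.2 = c.1 + 1 ∧ ρ.colLen (c.2 + 1) ≤ c.1 ∧ ν.colLen c.2 = ρ.colLen c.2 := by
  obtain ⟨i, j⟩ := c
  rw [openCors, Finset.mem_filter, mem_corners']
  dsimp
  rw [YoungDiagram.mem_iff_lt_colLen, YoungDiagram.mem_iff_lt_colLen,
    YoungDiagram.mem_iff_lt_colLen, skew_col_empty_iff hρν]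
  omega

lemma bridgeOpen {ρ ν : YoungDiagram} (hρν : ρ ≤ ν) {N : ℕ} (hN : ν.rowLen 0 ≤ N) :
    openN N ρ ν = (openCors ρ ν).card := by
  rw [openN]
  refine Finset.card_bij (fun j _ => (ρ.colLen j - 1, j)) ?_ ?_ ?_
  · intro j hj
    rw [Finset.mem_filter, Finset.mem_range] at hj
    obtain ⟨-, h1, h2⟩ := hj
    rw [mem_openCors_iff hρν]
    dsimp
    omega
  · intro a ha b hb hab
    exact (Prod.ext_iff.mp hab).2
  · rintro ⟨i, j⟩ hc
    rw [mem_openCors_iff hρν] at hc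
    dsimp at hc
    refine ⟨j, Finset.mem_filter.mpr ⟨Finset.mem_range.mpr ?_, ?_, ?_⟩, ?_⟩
    · refine col_lt_of_pos hN ?_
      have := colLen_le_of_le hρν j
      omega
    · omega
    · omega
    · rw [Prod.ext_iff]
      exact ⟨by dsimp; omega, rfl⟩

lemma skewSize_add {μ ρ ν : YoungDiagram} (hμρ : μ ≤ ρ) (hρν : ρ ≤ ν) :
    skewSize μ ν = skewSize μ ρ + skewSize ρ ν := by
  rw [skewSize, skewSize, skewSize, ← Finset.card_union_of_disjoint, skewCells, skewCells,
    skewCells]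
  · congr 1
    ext c
    simp only [Finset.mem_union, Finset.mem_sdiff]
    constructor
    · rintro ⟨h1, h2⟩
      by_cases hρ : c ∈ ρ.cells
      · exact Or.inl ⟨hρ, h2⟩
      · exact Or.inr ⟨h1, hρ⟩
    · rintro (⟨h1, h2⟩ | ⟨h1, h2⟩)
      · exact ⟨cells_subset_iff.mpr hρν h1, h2⟩
      · exact ⟨h1, fun hc => h2 (cells_subset_iff.mpr hμρ hc)⟩
  · rw [Finset.disjoint_left]
    rintro c hc hc'
    rw [skewCells, Finset.mem_sdiff] at hc hc'
    exact hc'.2 hc.1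

end SkewG
namespace SkewG
open YoungDiagram Finset

section Tableaux

variable {n m : ℕ} {t : Fin n} {μ ν : YoungDiagram}

/-- `c` carries an entry `< m` in `T`. -/
def SmallP (m : ℕ) (T : ↥(dShape μ ν) → Finset (Fin n)) (c : ℕ × ℕ) : Prop :=
  ∃ hc : c ∈ dShape μ ν, ∃ k ∈ T ⟨c, hc⟩, (k : ℕ) < m

/-- Cells of `μ` together with cells of the skew shape carrying an entry `< m`. -/
def rcells (m : ℕ) (T : ↥(dShape μ ν) → Finset (Fin n)) : Finset (ℕ × ℕ) :=
  μ.cells ∪ (skewCells μ ν).filter (SmallP m T)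

lemma exists_le_entry {T : ↥(dShape μ ν) → Finset (Fin n)} (hsvt : IsSVT T)
    {c c' : ↥(dShape μ ν)} (hr : c.1.1 ≤ c'.1.1) (hj : c.1.2 ≤ c'.1.2)
    (h1 : c.1 ∈ skewCells μ ν) (h2 : c'.1 ∈ skewCells μ ν)
    {b : Fin n} (hb : b ∈ T c') : ∃ a ∈ T c, a ≤ b := by
  have hd : (c.1.1, c'.1.2) ∈ skewCells μ ν := by
    rw [mem_skewCells] at h1 h2 ⊢
    constructor
    · exact ν.up_left_mem hr le_rfl (by
        have := h2.1
        rwa [show ((c'.1.1, c'.1.2) : ℕ × ℕ) = c'.1 from rfl])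
    · intro hmem
      exact h1.2 (μ.up_left_mem le_rfl hj hmem)
  set d : ↥(dShape μ ν) := ⟨(c.1.1, c'.1.2), Finset.mem_union_left _ hd⟩ with hdd
  rcases eq_or_lt_of_le hj with hjeq | hjlt
  · -- same column
    rcases eq_or_lt_of_le hr with hreq | hrlt
    · have : c = c' := Subtype.ext (Prod.ext hreq hjeq)
      exact ⟨b, this ▸ hb, le_rfl⟩
    · obtain ⟨a, ha⟩ := hsvt.1 c h1
      exact ⟨a, ha, le_of_lt (hsvt.2.2 c c' hjeq hrlt a ha b hb)⟩
  · -- c strictly to the left ; go through d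
    have hdrow : ∀ a ∈ T c, ∀ e ∈ T d, a ≤ e := hsvt.2.1 c d rfl hjlt
    rcases eq_or_lt_of_le hr with hreq | hrlt
    · have : d = c' := Subtype.ext (Prod.ext hreq rfl)
      obtain ⟨a, ha⟩ := hsvt.1 c h1
      exact ⟨a, ha, hdrow a ha b (this ▸ hb)⟩
    · have hdcol : ∀ e ∈ T d, ∀ b' ∈ T c', e < b' := hsvt.2.2 d c' rfl hrlt
      obtain ⟨a, ha⟩ := hsvt.1 c h1
      obtain ⟨e, he⟩ := hsvt.1 d hd
      exact ⟨a, ha, le_of_lt (lt_of_le_of_lt (hdrow a ha e he) (hdcol e he b hb))⟩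

lemma rcells_lower {T : ↥(dShape μ ν) → Finset (Fin n)} (hμν : μ ≤ ν) (hsvt : IsSVT T) :
    IsLowerSet ((rcells m T : Finset (ℕ × ℕ)) : Set (ℕ × ℕ)) := by
  intro c2 c1 hle hmem
  simp only [rcells, Finset.coe_union, Set.mem_union, Finset.coe_filter, Set.mem_setOf_eq,
    Finset.mem_coe, YoungDiagram.mem_cells] at hmem ⊢
  obtain ⟨h1, h2⟩ : c1.1 ≤ c2.1 ∧ c1.2 ≤ c2.2 := Prod.mk_le_mk.mp (by exact hle)
  rcases hmem with hmem | ⟨hskew, hP⟩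
  · exact Or.inl (μ.up_left_mem h1 h2 hmem)
  · by_cases hμ : c1 ∈ μ
    · exact Or.inl hμ
    · have hc1ν : c1 ∈ ν := ν.up_left_mem h1 h2 (mem_skewCells.mp hskew).1
      have hc1skew : c1 ∈ skewCells μ ν := mem_skewCells.mpr ⟨hc1ν, hμ⟩
      refine Or.inr ⟨hc1skew, ?_⟩
      obtain ⟨hc2d, k, hk, hksmall⟩ := hP
      have hc1d : c1 ∈ dShape μ ν := Finset.mem_union_left _ hc1skew
      obtain ⟨a, ha, hab⟩ := exists_le_entry hsvt (c := ⟨c1, hc1d⟩) (c' := ⟨c2, hc2d⟩)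
        h1 h2 hc1skew (mem_skewCells.mpr ⟨(mem_skewCells.mp hskew).1,
          (mem_skewCells.mp hskew).2⟩) hk
      exact ⟨hc1d, a, ha, by have := Fin.le_iff_val_le_val.mp hab; omega⟩

/-- The shape `ρ(T)` generated by the small entries of `T`. -/
def rho (m : ℕ) (T : ↥(dShape μ ν) → Finset (Fin n)) (hμν : μ ≤ ν) (hsvt : IsSVT T) :
    YoungDiagram :=
  ⟨rcells m T, rcells_lower hμν hsvt⟩

lemma mem_rho {T : ↥(dShape μ ν) → Finset (Fin n)} {hμν : μ ≤ ν} {hsvt : IsSVT T}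
    {c : ℕ × ℕ} : c ∈ rho m T hμν hsvt ↔
      c ∈ μ ∨ (c ∈ skewCells μ ν ∧ SmallP m T c) := by
  show c ∈ YoungDiagram.mk _ _ ↔ _
  rw [YoungDiagram.mem_mk, rcells, Finset.mem_union, Finset.mem_filter, YoungDiagram.mem_cells]

lemma rho_le {T : ↥(dShape μ ν) → Finset (Fin n)} {hμν : μ ≤ ν} {hsvt : IsSVT T} :
    μ ≤ rho m T hμν hsvt ∧ rho m T hμν hsvt ≤ ν := by
  constructor
  · rw [← YoungDiagram.cells_subset_iff]
    intro c hc
    rw [YoungDiagram.mem_cells] at hc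
    exact mem_rho.mpr (Or.inl hc)
  · rw [← YoungDiagram.cells_subset_iff]
    intro c hc
    rw [YoungDiagram.mem_cells] at hc
    rcases mem_rho.mp hc with h | h
    · exact hμν h
    · exact (mem_skewCells.mp h.1).1

lemma all_t (ht : (t : ℕ) = m) {T : ↥(dShape μ ν) → Finset (Fin n)} (hsvt : IsSVT T)
    (hbd : ∀ c, ∀ k ∈ T c, (k : ℕ) < m + 1) (c : ↥(dShape μ ν))
    (hskew : c.1 ∈ skewCells μ ν) (hnot : ¬ SmallP m T c.1) : T c = {t} := by
  have hps : ∀ k ∈ T c, k = t := by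
    intro k hk
    by_contra hne
    have h1 := hbd c k hk
    have h2 : ¬ (k : ℕ) < m := fun hsm => hnot ⟨c.2, k, hk, hsm⟩
    exact hne (Fin.ext (by omega))
  obtain ⟨k, hk⟩ := hsvt.1 c hskew
  ext k'
  rw [Finset.mem_singleton]
  constructor
  · exact hps k'
  · rintro rfl
    exact (hps k hk) ▸ hk

lemma rho_strip (ht : (t : ℕ) = m) {T : ↥(dShape μ ν) → Finset (Fin n)} (hμν : μ ≤ ν)
    (hsvt : IsSVT T) (hbd : ∀ c, ∀ k ∈ T c, (k : ℕ) < m + 1) (j : ℕ) :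
    ν.colLen j ≤ (rho m T hμν hsvt).colLen j + 1 := by
  by_contra hcon
  set r := (rho m T hμν hsvt).colLen j with hr
  have hskew : ∀ i, r ≤ i → i < ν.colLen j → ((i, j) ∈ skewCells μ ν ∧ ¬ SmallP m T (i, j)) := by
    intro i hi hi'
    have hνmem : (i, j) ∈ ν := YoungDiagram.mem_iff_lt_colLen.mpr hi'
    have hnrho : (i, j) ∉ rho m T hμν hsvt := fun hmem => by
      have := YoungDiagram.mem_iff_lt_colLen.mp hmem
      omega
    have hnμ : (i, j) ∉ μ := fun hmem => hnrho (mem_rho.mpr (Or.inl hmem))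
    have hsk : (i, j) ∈ skewCells μ ν := mem_skewCells.mpr ⟨hνmem, hnμ⟩
    exact ⟨hsk, fun hP => hnrho (mem_rho.mpr (Or.inr ⟨hsk, hP⟩))⟩
  obtain ⟨hsk1, hP1⟩ := hskew r le_rfl (by omega)
  obtain ⟨hsk2, hP2⟩ := hskew (r + 1) (by omega) (by omega)
  set c1 : ↥(dShape μ ν) := ⟨(r, j), Finset.mem_union_left _ hsk1⟩
  set c2 : ↥(dShape μ ν) := ⟨(r + 1, j), Finset.mem_union_left _ hsk2⟩
  have h1 : T c1 = {t} := all_t ht hsvt hbd c1 hsk1 hP1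
  have h2 : T c2 = {t} := all_t ht hsvt hbd c2 hsk2 hP2
  have := hsvt.2.2 c1 c2 rfl (show r < r + 1 by omega) t (h1 ▸ Finset.mem_singleton_self t)
    t (h2 ▸ Finset.mem_singleton_self t)
  exact absurd this (lt_irrefl t)

lemma t_mem_corner (ht : (t : ℕ) = m) {T : ↥(dShape μ ν) → Finset (Fin n)} (hμν : μ ≤ ν)
    (hsvt : IsSVT T) (hbd : ∀ c, ∀ k ∈ T c, (k : ℕ) < m + 1) (c : ↥(dShape μ ν))
    (hc : c.1 ∈ rho m T hμν hsvt) (htm : t ∈ T c) :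
    c.1 ∈ openCors (rho m T hμν hsvt) ν := by
  obtain ⟨⟨r, j⟩, hcd⟩ := c
  set ρ := rho m T hμν hsvt with hρdef
  rw [openCors, Finset.mem_filter, mem_corners']
  dsimp at hc htm ⊢
  have hcorμ : (r, j) ∈ μ → (r, j) ∈ corners μ := by
    intro hμmem
    rcases mem_dShape.mp hcd with hsk | hcor
    · exact absurd hμmem (mem_skewCells.mp hsk).2
    · exact hcor
  refine ⟨⟨hc, ?_, ?_⟩, ?_⟩
  · -- (r+1, j) ∉ ρ
    intro hmem
    rcases mem_rho.mp hmem with hμmem | ⟨hsk, hP⟩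
    · have hcμ : (r, j) ∈ μ := μ.up_left_mem (by omega) le_rfl hμmem
      exact (mem_corners'.mp (hcorμ hcμ)).2.1 hμmem
    · obtain ⟨hd, k, hk, hksm⟩ := hP
      have := hsvt.2.2 ⟨(r, j), hcd⟩ ⟨(r + 1, j), hd⟩ rfl (show r < r + 1 by omega) t htm k hk
      have := Fin.lt_iff_val_lt_val.mp this
      omega
  · -- (r, j+1) ∉ ρ
    intro hmem
    rcases mem_rho.mp hmem with hμmem | ⟨hsk, hP⟩
    · have hcμ : (r, j) ∈ μ := μ.up_left_mem le_rfl (by omega) hμmem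
      exact (mem_corners'.mp (hcorμ hcμ)).2.2 hμmem
    · obtain ⟨hd, k, hk, hksm⟩ := hP
      have := hsvt.2.1 ⟨(r, j), hcd⟩ ⟨(r, j + 1), hd⟩ rfl (show j < j + 1 by omega) t htm k hk
      have := Fin.le_iff_val_le_val.mp this
      omega
  · -- openness
    rintro ⟨r', j2⟩ hc' hcol
    dsimp at hcol
    subst hcol
    rw [mem_skewCells] at hc'
    obtain ⟨hν', hnρ'⟩ := hc'
    have hr : r < ρ.colLen j2 := YoungDiagram.mem_iff_lt_colLen.mp hc
    have hr' : ¬ r' < ρ.colLen j2 := fun h => hnρ' (YoungDiagram.mem_iff_lt_colLen.mpr h)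
    have hnμ' : (r', j2) ∉ μ := fun h => hnρ' (mem_rho.mpr (Or.inl h))
    have hsk' : (r', j2) ∈ skewCells μ ν := mem_skewCells.mpr ⟨hν', hnμ'⟩
    have hd' : (r', j2) ∈ dShape μ ν := Finset.mem_union_left _ hsk'
    have hnP : ¬ SmallP m T (r', j2) := fun hP => hnρ' (mem_rho.mpr (Or.inr ⟨hsk', hP⟩))
    have hall : T ⟨(r', j2), hd'⟩ = {t} := all_t ht hsvt hbd _ hsk' hnP
    have := hsvt.2.2 ⟨(r, j2), hcd⟩ ⟨(r', j2), hd'⟩ rfl (show r < r' by omega) t htm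
      t (hall ▸ Finset.mem_singleton_self t)
    exact absurd this (lt_irrefl t)

end Tableaux

end SkewG
namespace SkewG
open YoungDiagram Finset

section Fiber

variable {n m : ℕ} {t : Fin n} {μ ν ρ : YoungDiagram}

lemma dShape_subset_cells (hμρ : μ ≤ ρ) : dShape μ ρ ⊆ ρ.cells := by
  intro c hc
  rcases mem_dShape.mp hc with h | h
  · exact (mem_skewCells.mp h).1
  · exact cells_subset_iff.mpr hμρ (corners_subset h)

lemma skew_top_subset_dShape (hμρ : μ ≤ ρ) {c : ℕ × ℕ} (hc : c ∈ skewCells ρ ν) :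
    c ∈ dShape μ ν := by
  rw [mem_skewCells] at hc
  exact Finset.mem_union_left _ (mem_skewCells.mpr ⟨hc.1, fun h => hc.2 (hμρ h)⟩)

/-- Forward map: combine a small tableau on `μ//ρ`, the all-`t` filling of `ν/ρ`, and extra
`t`-marks on the open corners in `S`. -/
def Tof (ρ : YoungDiagram) (t : Fin n) (T' : ↥(dShape μ ρ) → Finset (Fin n))
    (S : Finset (ℕ × ℕ)) : ↥(dShape μ ν) → Finset (Fin n) := fun c =>
  (if h : c.1 ∈ dShape μ ρ then T' ⟨c.1, h⟩ else ∅) ∪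
    (if c.1 ∈ S ∨ c.1 ∈ skewCells ρ ν then {t} else ∅)

/-- Backward map, tableau part: keep the small entries. -/
def Tback (m : ℕ) (hρν : ρ ≤ ν) (T : ↥(dShape μ ν) → Finset (Fin n)) :
    ↥(dShape μ ρ) → Finset (Fin n) := fun c =>
  (T ⟨c.1, dShape_subset_dShape hρν c.2⟩).filter fun k => (k : ℕ) < m

/-- Backward map, corner-set part: the open corners of `ρ` marked with `t`. -/
def Sback (ν : YoungDiagram) (t : Fin n) (T : ↥(dShape μ ν) → Finset (Fin n)) :
    Finset (ℕ × ℕ) :=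
  (openCors ρ ν).filter fun c => ∃ h : c ∈ dShape μ ν, t ∈ T ⟨c, h⟩

/-- Total version of `rho`. -/
def rhoTot (m : ℕ) (μ ν : YoungDiagram) (T : ↥(dShape μ ν) → Finset (Fin n)) :
    YoungDiagram :=
  if h : ∃ d : YoungDiagram, d.cells = rcells m T then h.choose else ⊥

lemma rhoTot_eq {T : ↥(dShape μ ν) → Finset (Fin n)} (hμν : μ ≤ ν) (hsvt : IsSVT T) :
    rhoTot m μ ν T = rho m T hμν hsvt := by
  rw [rhoTot, dif_pos ⟨rho m T hμν hsvt, rfl⟩]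
  exact YoungDiagram.ext
    (⟨rho m T hμν hsvt, rfl⟩ : ∃ d : YoungDiagram, d.cells = rcells m T).choose_spec

lemma mem_Tof {T' : ↥(dShape μ ρ) → Finset (Fin n)} {S : Finset (ℕ × ℕ)}
    {c : ↥(dShape μ ν)} {k : Fin n} :
    k ∈ Tof ρ t T' S c ↔
      (∃ h : c.1 ∈ dShape μ ρ, k ∈ T' ⟨c.1, h⟩) ∨
      (k = t ∧ (c.1 ∈ S ∨ c.1 ∈ skewCells ρ ν)) := by
  rw [Tof, Finset.mem_union]
  constructor
  · rintro (hk | hk)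
    · by_cases h : c.1 ∈ dShape μ ρ
      · rw [dif_pos h] at hk
        exact Or.inl ⟨h, hk⟩
      · rw [dif_neg h] at hk
        exact absurd hk (Finset.notMem_empty _)
    · by_cases h : c.1 ∈ S ∨ c.1 ∈ skewCells ρ ν
      · rw [if_pos h, Finset.mem_singleton] at hk
        exact Or.inr ⟨hk, h⟩
      · rw [if_neg h] at hk
        exact absurd hk (Finset.notMem_empty _)
  · rintro (⟨h, hk⟩ | ⟨rfl, h⟩)
    · exact Or.inl (by rw [dif_pos h]; exact hk)
    · exact Or.inr (by rw [if_pos h]; exact Finset.mem_singleton_self _)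

section Forward

lemma source_mem_rho (hμρ : μ ≤ ρ) {c : ℕ × ℕ} (h : c ∈ dShape μ ρ) : c ∈ ρ :=
  dShape_subset_cells hμρ h

variable (ht : (t : ℕ) = m) (hμρ : μ ≤ ρ) (hρν : ρ ≤ ν)
  (hstrip : ∀ j, ν.colLen j ≤ ρ.colLen j + 1)
  {T' : ↥(dShape μ ρ) → Finset (Fin n)} {S : Finset (ℕ × ℕ)}
  (hT'svt : IsSVT T') (hT'bd : ∀ c, ∀ k ∈ T' c, (k : ℕ) < m)
  (hS : S ⊆ openCors ρ ν)

include ht hT'bd in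
lemma Tof_bound : ∀ c, ∀ k ∈ Tof (ν := ν) ρ t T' S c, (k : ℕ) < m + 1 := by
  intro c k hk
  rcases mem_Tof.mp hk with ⟨h, hk⟩ | ⟨rfl, -⟩
  · have := hT'bd _ _ hk
    omega
  · omega

include ht hμρ hstrip hT'svt hT'bd hS in
lemma Tof_svt : IsSVT (Tof (ν := ν) ρ t T' S) := by
  have hScor : ∀ c ∈ S, c ∈ ρ ∧ (c.1 + 1, c.2) ∉ ρ ∧ (c.1, c.2 + 1) ∉ ρ ∧
      (∀ c' ∈ skewCells ρ ν, c'.2 ≠ c.2) := by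
    intro c hc
    have h1 := hS hc
    rw [openCors, Finset.mem_filter, mem_corners'] at h1
    exact ⟨h1.1.1, h1.1.2.1, h1.1.2.2, h1.2⟩
  refine ⟨?_, ?_, ?_⟩
  · -- nonempty on skew cells
    intro c hc
    by_cases hρm : c.1 ∈ ρ
    · have hd : c.1 ∈ dShape μ ρ :=
        Finset.mem_union_left _ (mem_skewCells.mpr ⟨hρm, (mem_skewCells.mp hc).2⟩)
      obtain ⟨k, hk⟩ := hT'svt.1 ⟨c.1, hd⟩ (mem_skewCells.mpr ⟨hρm, (mem_skewCells.mp hc).2⟩)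
      exact ⟨k, mem_Tof.mpr (Or.inl ⟨hd, hk⟩)⟩
    · refine ⟨t, mem_Tof.mpr (Or.inr ⟨rfl, Or.inr ?_⟩)⟩
      exact mem_skewCells.mpr ⟨(mem_skewCells.mp hc).1, hρm⟩
  · -- rows weakly increase
    intro c c' hrow hcol a ha b hb
    rcases mem_Tof.mp ha with ⟨h, hk⟩ | ⟨hat, hsrc⟩ <;>
      rcases mem_Tof.mp hb with ⟨h', hk'⟩ | ⟨hbt, hsrc'⟩
    · exact hT'svt.2.1 ⟨c.1, h⟩ ⟨c'.1, h'⟩ hrow hcol a hk b hk'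
    · have h1 := hT'bd _ _ hk
      have h2 : (b : ℕ) = m := hbt ▸ ht
      rw [Fin.le_def]
      omega
    · exfalso
      have hc'ρ : c'.1 ∈ ρ := source_mem_rho hμρ h'
      rcases hsrc with hcS | hcsk
      · have h2 := (hScor _ hcS).2.2.1
        exact h2 (ρ.up_left_mem (le_of_eq hrow)
          (by have h0 : c.1.2 < c'.1.2 := hcol; omega)
          (show ((c'.1).1, (c'.1).2) ∈ ρ from hc'ρ))
      · exact (mem_skewCells.mp hcsk).2
          (ρ.up_left_mem (le_of_eq hrow) (le_of_lt hcol) hc'ρ)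
    · exact le_of_eq (hbt ▸ hat)
  · -- columns strictly increase
    intro c c' hcol hrow a ha b hb
    rcases mem_Tof.mp ha with ⟨h, hk⟩ | ⟨hat, hsrc⟩ <;>
      rcases mem_Tof.mp hb with ⟨h', hk'⟩ | ⟨hbt, hsrc'⟩
    · exact hT'svt.2.2 ⟨c.1, h⟩ ⟨c'.1, h'⟩ hcol hrow a hk b hk'
    · have h1 := hT'bd _ _ hk
      have h2 : (b : ℕ) = m := hbt ▸ ht
      rw [Fin.lt_def]
      omega
    · exfalso
      have hc'ρ : c'.1 ∈ ρ := source_mem_rho hμρ h'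
      have hcρ : c.1 ∈ ρ := ρ.up_left_mem (le_of_lt hrow) (le_of_eq hcol) hc'ρ
      rcases hsrc with hcS | hcsk
      · have h2 := (hScor _ hcS).2.1
        exact h2 (ρ.up_left_mem (by have h0 : c.1.1 < c'.1.1 := hrow; omega)
          (le_of_eq hcol) (show ((c'.1).1, (c'.1).2) ∈ ρ from hc'ρ))
      · exact (mem_skewCells.mp hcsk).2 hcρ
    · exfalso
      rcases hsrc' with hc'S | hc'sk
      · have hc'ρ : c'.1 ∈ ρ := (hScor _ hc'S).1
        rcases hsrc with hcS | hcsk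
        · have h2 := (hScor _ hcS).2.1
          exact h2 (ρ.up_left_mem (by have h0 : c.1.1 < c'.1.1 := hrow; omega)
            (le_of_eq hcol) (show ((c'.1).1, (c'.1).2) ∈ ρ from hc'ρ))
        · exact (mem_skewCells.mp hcsk).2
            (ρ.up_left_mem (le_of_lt hrow) (le_of_eq hcol) hc'ρ)
      · rcases hsrc with hcS | hcsk
        · exact (hScor _ hcS).2.2.2 c'.1 hc'sk hcol.symm
        · obtain ⟨hcν, hcρ⟩ := mem_skewCells.mp hcsk
          obtain ⟨hc'ν, hc'ρ⟩ := mem_skewCells.mp hc'sk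
          have e1 : ¬ c.1.1 < ρ.colLen c.1.2 := fun hlt =>
            hcρ (YoungDiagram.mem_iff_lt_colLen.mpr hlt)
          have e2 : c.1.1 < ν.colLen c.1.2 := YoungDiagram.mem_iff_lt_colLen.mp hcν
          have e3 : ¬ c'.1.1 < ρ.colLen c'.1.2 := fun hlt =>
            hc'ρ (YoungDiagram.mem_iff_lt_colLen.mpr hlt)
          have e4 : c'.1.1 < ν.colLen c'.1.2 := YoungDiagram.mem_iff_lt_colLen.mp hc'ν
          have e5 := hstrip c.1.2
          rw [hcol] at e1 e2 e5
          omega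

include ht hμρ hρν hT'svt hT'bd in
lemma Tof_rho (hμν : μ ≤ ν) (hsvt : IsSVT (Tof (ν := ν) ρ t T' S)) :
    rho m (Tof ρ t T' S) hμν hsvt = ρ := by
  apply YoungDiagram.ext
  show rcells m (Tof ρ t T' S) = ρ.cells
  ext c
  rw [rcells, Finset.mem_union, Finset.mem_filter]
  constructor
  · rintro (hc | ⟨hsk, hd, k, hk, hsm⟩)
    · exact cells_subset_iff.mpr hμρ hc
    · rcases mem_Tof.mp hk with ⟨h, -⟩ | ⟨rfl, -⟩
      · exact source_mem_rho hμρ h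
      · omega
  · intro hc
    by_cases hμ : c ∈ μ
    · exact Or.inl hμ
    · have hcm : c ∈ ρ := hc
      have hd : c ∈ dShape μ ρ := Finset.mem_union_left _ (mem_skewCells.mpr ⟨hcm, hμ⟩)
      have hcd : c ∈ dShape μ ν := dShape_subset_dShape hρν hd
      obtain ⟨k, hk⟩ := hT'svt.1 ⟨c, hd⟩ (mem_skewCells.mpr ⟨hcm, hμ⟩)
      exact Or.inr ⟨mem_skewCells.mpr ⟨hρν hcm, hμ⟩,
        hcd, k, mem_Tof.mpr (Or.inl ⟨hd, hk⟩), hT'bd _ _ hk⟩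

include ht hμρ hρν hT'svt hT'bd in
lemma Tof_rhoTot (hμν : μ ≤ ν) (hsvt : IsSVT (Tof (ν := ν) ρ t T' S)) :
    rhoTot m μ ν (Tof ρ t T' S) = ρ :=
  (rhoTot_eq hμν hsvt).trans (Tof_rho ht hμρ hρν hT'svt hT'bd hμν hsvt)

include ht hT'bd in
lemma Tback_Tof : Tback m hρν (Tof (ν := ν) ρ t T' S) = T' := by
  funext c
  ext k
  rw [Tback, Finset.mem_filter]
  constructor
  · rintro ⟨hk, hsm⟩
    rcases mem_Tof.mp hk with ⟨h, hk'⟩ | ⟨rfl, -⟩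
    · exact hk'
    · omega
  · intro hk
    exact ⟨mem_Tof.mpr (Or.inl ⟨c.2, hk⟩), hT'bd _ _ hk⟩

include ht hμρ hρν hT'bd hS in
lemma Sback_Tof : Sback (ρ := ρ) ν t (Tof ρ t T' S) = S := by
  ext c
  rw [Sback, Finset.mem_filter]
  constructor
  · rintro ⟨hoc, h, htm⟩
    rcases mem_Tof.mp htm with ⟨hd, hk⟩ | ⟨-, hsrc⟩
    · have := hT'bd _ _ hk
      omega
    · rcases hsrc with hc | hc
      · exact hc
      · exfalso
        have hcρ : c ∈ ρ := by
          rw [openCors, Finset.mem_filter] at hoc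
          exact corners_subset hoc.1
        exact (mem_skewCells.mp hc).2 hcρ
  · intro hc
    refine ⟨hS hc, openCors_subset_dShape hμρ hρν (hS hc), ?_⟩
    exact mem_Tof.mpr (Or.inr ⟨rfl, Or.inl hc⟩)

end Forward

section Backward

variable (ht : (t : ℕ) = m) (hμν : μ ≤ ν) (hμρ : μ ≤ ρ) (hρν : ρ ≤ ν)
  {T : ↥(dShape μ ν) → Finset (Fin n)} (hsvt : IsSVT T)
  (hbd : ∀ c, ∀ k ∈ T c, (k : ℕ) < m + 1)
  (hρeq : rho m T hμν hsvt = ρ)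

include hμν hsvt hρeq in
lemma Tback_svt : IsSVT (Tback m hρν T) := by
  refine ⟨?_, ?_, ?_⟩
  · intro c hc
    have hcρ : c.1 ∈ rho m T hμν hsvt := by rw [hρeq]; exact (mem_skewCells.mp hc).1
    rcases mem_rho.mp hcρ with hμm | ⟨-, hd, k, hk, hsm⟩
    · exact absurd hμm (mem_skewCells.mp hc).2
    · exact ⟨k, Finset.mem_filter.mpr ⟨hk, hsm⟩⟩
  · intro c c' hrow hcol a ha b hb
    exact hsvt.2.1 ⟨c.1, dShape_subset_dShape hρν c.2⟩ ⟨c'.1, dShape_subset_dShape hρν c'.2⟩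
      hrow hcol a (Finset.mem_filter.mp ha).1 b (Finset.mem_filter.mp hb).1
  · intro c c' hcol hrow a ha b hb
    exact hsvt.2.2 ⟨c.1, dShape_subset_dShape hρν c.2⟩ ⟨c'.1, dShape_subset_dShape hρν c'.2⟩
      hcol hrow a (Finset.mem_filter.mp ha).1 b (Finset.mem_filter.mp hb).1

lemma Tback_bd : ∀ c, ∀ k ∈ Tback m hρν T c, (k : ℕ) < m := by
  intro c k hk
  exact (Finset.mem_filter.mp hk).2

lemma Sback_subset : Sback (ρ := ρ) ν t T ⊆ openCors ρ ν := Finset.filter_subset _ _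

include ht hμν hμρ hsvt hbd hρeq in
lemma Tof_Tback : Tof ρ t (Tback m hρν T) (Sback (ρ := ρ) ν t T) = T := by
  funext c
  ext k
  rw [mem_Tof]
  constructor
  · rintro (⟨h, hk⟩ | ⟨rfl, hsrc⟩)
    · exact (Finset.mem_filter.mp hk).1
    · rcases hsrc with hcS | hsk
      · obtain ⟨-, h2, htm⟩ := Finset.mem_filter.mp hcS
        exact htm
      · have hc1 : c.1 ∉ ρ := (mem_skewCells.mp hsk).2
        have hskμν : c.1 ∈ skewCells μ ν := mem_skewCells.mpr
          ⟨(mem_skewCells.mp hsk).1, fun hm => hc1 (hμρ hm)⟩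
        have hnP : ¬ SmallP m T c.1 := fun hP => hc1 (by
          rw [← hρeq]; exact mem_rho.mpr (Or.inr ⟨hskμν, hP⟩))
        have hall := all_t ht hsvt hbd c hskμν hnP
        rw [hall]
        exact Finset.mem_singleton_self _
  · intro hk
    by_cases hsm : (k : ℕ) < m
    · have hd : c.1 ∈ dShape μ ρ := by
        rcases mem_dShape.mp c.2 with hskμν | hcor
        · have hP : SmallP m T c.1 := ⟨c.2, k, hk, hsm⟩
          have : c.1 ∈ ρ := by rw [← hρeq]; exact mem_rho.mpr (Or.inr ⟨hskμν, hP⟩)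
          exact mem_dShape.mpr (Or.inl (mem_skewCells.mpr ⟨this, (mem_skewCells.mp hskμν).2⟩))
        · exact mem_dShape.mpr (Or.inr hcor)
      exact Or.inl ⟨hd, Finset.mem_filter.mpr ⟨hk, hsm⟩⟩
    · have hkt : k = t := Fin.ext (by have := hbd c k hk; omega)
      refine Or.inr ⟨hkt, ?_⟩
      by_cases hcρ : c.1 ∈ ρ
      · refine Or.inl (Finset.mem_filter.mpr ⟨?_, c.2, hkt ▸ hk⟩)
        have := t_mem_corner ht hμν hsvt hbd c (by rw [hρeq]; exact hcρ) (hkt ▸ hk)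
        rwa [hρeq] at this
      · refine Or.inr (mem_skewCells.mpr ⟨?_, hcρ⟩)
        rcases mem_dShape.mp c.2 with hskμν | hcor
        · exact (mem_skewCells.mp hskμν).1
        · exact absurd (hμρ (corners_subset hcor)) hcρ

end Backward


end Fiber

end SkewG
namespace SkewG
open YoungDiagram Finset

section Weights

variable {n m : ℕ} {t : Fin n} {μ ν ρ : YoungDiagram}

lemma svtSize_ge {lam : YoungDiagram} {T : ↥(dShape μ lam) → Finset (Fin n)}
    (hsvt : IsSVT T) : skewSize μ lam ≤ svtSize T := by
  rw [svtSize, skewSize]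
  rw [sum_subtype_eq (fun c => (T c).card)
    (fun c => if h : c ∈ dShape μ lam then (T ⟨c, h⟩).card else 0)
    (fun c h => by rw [dif_pos h])]
  calc (skewCells μ lam).card
      = ∑ c ∈ skewCells μ lam, 1 := (Finset.card_eq_sum_ones _)
    _ ≤ ∑ c ∈ skewCells μ lam,
          (if h : c ∈ dShape μ lam then (T ⟨c, h⟩).card else 0) := by
        refine Finset.sum_le_sum fun c hc => ?_
        rw [dif_pos (show c ∈ dShape μ lam from Finset.mem_union_left _ hc)]
        exact Finset.card_pos.mpr (hsvt.1 ⟨c, Finset.mem_union_left _ hc⟩ hc)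
    _ ≤ ∑ c ∈ dShape μ lam,
          (if h : c ∈ dShape μ lam then (T ⟨c, h⟩).card else 0) :=
        Finset.sum_le_sum_of_subset Finset.subset_union_left

variable (ht : (t : ℕ) = m) (hμρ : μ ≤ ρ) (hρν : ρ ≤ ν)
  {T' : ↥(dShape μ ρ) → Finset (Fin n)} {S : Finset (ℕ × ℕ)}
  (hT'bd : ∀ c, ∀ k ∈ T' c, (k : ℕ) < m)
  (hS : S ⊆ openCors ρ ν)

include hS in
lemma S_disj : Disjoint S (skewCells ρ ν) := by
  rw [Finset.disjoint_left]
  intro c hc hc'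
  have hcρ : c ∈ ρ := by
    have := hS hc
    rw [openCors, Finset.mem_filter] at this
    exact corners_subset this.1
  exact (mem_skewCells.mp hc').2 hcρ

include hμρ hρν hS in
lemma S_union_subset : S ∪ skewCells ρ ν ⊆ dShape μ ν := by
  intro c hc
  rcases Finset.mem_union.mp hc with hc | hc
  · exact openCors_subset_dShape hμρ hρν (hS hc)
  · exact skew_top_subset_dShape hμρ hc

include ht hT'bd in
lemma Tof_parts_disjoint (c : ↥(dShape μ ν)) :
    Disjoint (if h : c.1 ∈ dShape μ ρ then T' ⟨c.1, h⟩ else ∅)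
      (if c.1 ∈ S ∨ c.1 ∈ skewCells ρ ν then ({t} : Finset (Fin n)) else ∅) := by
  rw [Finset.disjoint_left]
  intro k hk hk'
  by_cases h : c.1 ∈ dShape μ ρ
  · rw [dif_pos h] at hk
    have h1 := hT'bd _ _ hk
    by_cases h2 : c.1 ∈ S ∨ c.1 ∈ skewCells ρ ν
    · rw [if_pos h2, Finset.mem_singleton] at hk'
      subst hk'
      omega
    · rw [if_neg h2] at hk'
      exact absurd hk' (Finset.notMem_empty _)
  · rw [dif_neg h] at hk
    exact absurd hk (Finset.notMem_empty _)

include ht hμρ hρν hT'bd hS in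
lemma Tof_size :
    svtSize (Tof (ν := ν) ρ t T' S) = svtSize T' + (S.card + skewSize ρ ν) := by
  rw [svtSize]
  have hcard : ∀ c : ↥(dShape μ ν), (Tof (ν := ν) ρ t T' S c).card
      = (if h : c.1 ∈ dShape μ ρ then (T' ⟨c.1, h⟩).card else 0)
        + (if c.1 ∈ S ∪ skewCells ρ ν then 1 else 0) := by
    intro c
    rw [Tof, Finset.card_union_of_disjoint (Tof_parts_disjoint ht hT'bd c)]
    congr 1
    · by_cases h : c.1 ∈ dShape μ ρ
      · rw [dif_pos h, dif_pos h]
      · rw [dif_neg h, dif_neg h, Finset.card_empty]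
    · by_cases h : c.1 ∈ S ∨ c.1 ∈ skewCells ρ ν
      · rw [if_pos h, if_pos (Finset.mem_union.mpr h), Finset.card_singleton]
      · rw [if_neg h, if_neg (fun hm => h (Finset.mem_union.mp hm)), Finset.card_empty]
  simp_rw [hcard]
  rw [Finset.sum_add_distrib]
  congr 1
  · -- small part
    rw [sum_subtype_eq
        (fun c : ↥(dShape μ ν) =>
          if h : c.1 ∈ dShape μ ρ then (T' ⟨c.1, h⟩).card else 0)
        (fun c => if h : c ∈ dShape μ ρ then (T' ⟨c, h⟩).card else 0)
        (fun c h => rfl)]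
    rw [← Finset.sum_subset (dShape_subset_dShape hρν)
        (fun c _ hc => by rw [dif_neg hc])]
    rw [svtSize, sum_subtype_eq (fun c => (T' c).card)
        (fun c => if h : c ∈ dShape μ ρ then (T' ⟨c, h⟩).card else 0)
        (fun c h => by rw [dif_pos h])]
  · -- t part
    rw [sum_subtype_eq
        (fun c : ↥(dShape μ ν) => if c.1 ∈ S ∪ skewCells ρ ν then 1 else 0)
        (fun c => if c ∈ S ∪ skewCells ρ ν then 1 else 0)
        (fun c h => rfl)]
    rw [Finset.sum_ite_mem, Finset.inter_eq_right.mpr (S_union_subset hμρ hρν hS),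
      Finset.sum_const, smul_eq_mul, mul_one,
      Finset.card_union_of_disjoint (S_disj hS), skewSize]

variable {M' : Type*} [CommMonoid M']

include ht hμρ hρν hT'bd hS in
lemma Tof_monomial (φ : Fin n → M') :
    (∏ c : ↥(dShape μ ν), ∏ k ∈ Tof (ν := ν) ρ t T' S c, φ k)
      = (∏ c : ↥(dShape μ ρ), ∏ k ∈ T' c, φ k) * (φ t) ^ (S.card + skewSize ρ ν) := by
  have hsplit : ∀ c : ↥(dShape μ ν), (∏ k ∈ Tof (ν := ν) ρ t T' S c, φ k)
      = (if h : c.1 ∈ dShape μ ρ then ∏ k ∈ T' ⟨c.1, h⟩, φ k else 1)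
        * (if c.1 ∈ S ∪ skewCells ρ ν then φ t else 1) := by
    intro c
    rw [Tof, Finset.prod_union (Tof_parts_disjoint ht hT'bd c)]
    congr 1
    · by_cases h : c.1 ∈ dShape μ ρ
      · rw [dif_pos h, dif_pos h]
      · rw [dif_neg h, dif_neg h, Finset.prod_empty]
    · by_cases h : c.1 ∈ S ∨ c.1 ∈ skewCells ρ ν
      · rw [if_pos h, if_pos (Finset.mem_union.mpr h), Finset.prod_singleton]
      · rw [if_neg h, if_neg (fun hm => h (Finset.mem_union.mp hm)), Finset.prod_empty]
  simp_rw [hsplit]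
  rw [Finset.prod_mul_distrib]
  congr 1
  · rw [prod_subtype_eq
        (fun c : ↥(dShape μ ν) =>
          if h : c.1 ∈ dShape μ ρ then ∏ k ∈ T' ⟨c.1, h⟩, φ k else 1)
        (fun c => if h : c ∈ dShape μ ρ then ∏ k ∈ T' ⟨c, h⟩, φ k else 1)
        (fun c h => rfl)]
    rw [← Finset.prod_subset (dShape_subset_dShape hρν)
        (fun c _ hc => by rw [dif_neg hc])]
    rw [prod_subtype_eq (fun c : ↥(dShape μ ρ) => ∏ k ∈ T' c, φ k)
        (fun c => if h : c ∈ dShape μ ρ then ∏ k ∈ T' ⟨c, h⟩, φ k else 1)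
        (fun c h => by rw [dif_pos h])]
  · rw [prod_subtype_eq
        (fun c : ↥(dShape μ ν) => if c.1 ∈ S ∪ skewCells ρ ν then φ t else 1)
        (fun c => if c ∈ S ∪ skewCells ρ ν then φ t else 1)
        (fun c h => rfl)]
    rw [Finset.prod_ite, Finset.prod_const, Finset.prod_const_one, mul_one,
      Finset.filter_mem_eq_inter, Finset.inter_eq_right.mpr (S_union_subset hμρ hρν hS),
      Finset.card_union_of_disjoint (S_disj hS), skewSize]

end Weights

end SkewG
namespace SkewG
open YoungDiagram Finset MvPolynomial

/-- The key combinatorial identity (one-variable peeling of the SVT generating function). -/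
theorem key_step (R : Type*) [CommRing R] (β : R) {n : ℕ} (m : ℕ) (hm : m < n) (N : ℕ)
    (μ ν : YoungDiagram) (hμν : μ ≤ ν) (hN : ν.rowLen 0 ≤ N) :
    GsvtLe R β n (m + 1) μ ν
      = ∑ ρ ∈ subDiagrams ν,
          (if μ ≤ ρ then GsvtLe R β n m μ ρ else 0)
            * passCoeff (MvPolynomial (Fin n) R) (MvPolynomial.C β)
                (MvPolynomial.X ⟨m, hm⟩) N ρ ν := by
  classical
  set t : Fin n := ⟨m, hm⟩ with htdef
  have ht : (t : ℕ) = m := rfl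
  -- expansion of the binomial power over subsets of open corners
  have hpow : ∀ O : Finset (ℕ × ℕ),
      ((1 : MvPolynomial (Fin n) R) - C β * X t) ^ O.card
        = ∑ S ∈ O.powerset, (-β) ^ S.card • (X t : MvPolynomial (Fin n) R) ^ S.card := by
    intro O
    have h1 : ((1 : MvPolynomial (Fin n) R) - C β * X t) ^ O.card
        = ∏ _c ∈ O, (-(C β * X t) + 1) := by
      rw [Finset.prod_const, Finset.card_def]
      congr 1
      ring
    rw [h1, Finset.prod_add]
    refine Finset.sum_congr rfl fun S hS => ?_
    rw [Finset.prod_const, Finset.prod_const_one, mul_one,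
      show (-(C β * X t) : MvPolynomial (Fin n) R) = C (-β) * X t by rw [map_neg, neg_mul],
      mul_pow, ← map_pow, smul_eq_C_mul]
  have claim1 : ∀ ρ : YoungDiagram,
      (if μ ≤ ρ then GsvtLe R β n m μ ρ else 0)
          * passCoeff (MvPolynomial (Fin n) R) (C β) (X t) N ρ ν
      = if μ ≤ ρ ∧ ρ ≤ ν ∧ (∀ j, ν.colLen j ≤ ρ.colLen j + 1)
        then GsvtLe R β n m μ ρ * ((X t : MvPolynomial (Fin n) R) ^ skewSize ρ ν
          * ∑ S ∈ (openCors ρ ν).powerset,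
              (-β) ^ S.card • (X t : MvPolynomial (Fin n) R) ^ S.card)
        else 0 := by
    intro ρ
    rw [passCoeff]
    by_cases hstr : HStripN N ρ ν
    · have hρν : ρ ≤ ν := le_of_colLen_le fun j => (hstr.1 j).1
      have hstrip : ∀ j, ν.colLen j ≤ ρ.colLen j + 1 := fun j => (hstr.1 j).2
      rw [if_pos hstr, bridgeAdd hρν hN, bridgeOpen hρν hN, hpow]
      by_cases hμρ : μ ≤ ρ
      · rw [if_pos hμρ, if_pos ⟨hμρ, hρν, hstrip⟩]
      · rw [if_neg hμρ, if_neg (fun hc => hμρ hc.1), zero_mul]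
    · rw [if_neg hstr, mul_zero, if_neg]
      rintro ⟨hμρ, hρν, hstrip⟩
      refine hstr ⟨fun j => ⟨colLen_le_of_le hρν j, hstrip j⟩, fun j hj => ?_⟩
      have h0 : ν.colLen j = 0 := colLen_eq_zero_of hN hj
      have := colLen_le_of_le hρν j
      omega
  rw [Finset.sum_congr rfl fun ρ _ => claim1 ρ, ← Finset.sum_filter]
  -- fiberwise decomposition of the left-hand side
  rw [GsvtLe]
  rw [← Finset.sum_fiberwise_of_maps_to (g := rhoTot m μ ν)
    (t := (subDiagrams ν).filter fun ρ =>
      μ ≤ ρ ∧ ρ ≤ ν ∧ ∀ j, ν.colLen j ≤ ρ.colLen j + 1) ?hmaps]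
  case hmaps =>
    intro T hT
    rw [Finset.mem_filter] at hT
    obtain ⟨-, hsvt, hbd⟩ := hT
    rw [rhoTot_eq hμν hsvt, Finset.mem_filter]
    exact ⟨mem_subDiagrams_of_le rho_le.2,
      rho_le.1, rho_le.2, rho_strip ht hμν hsvt hbd⟩
  -- now compare fibers
  refine Finset.sum_congr rfl fun ρ hρ => ?_
  rw [Finset.mem_filter] at hρ
  obtain ⟨hsub, hμρ, hρν, hstrip⟩ := hρ
  -- weight of an assembled tableau
  have pairweight : ∀ (T' : ↥(dShape μ ρ) → Finset (Fin n)) (S : Finset (ℕ × ℕ)),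
      IsSVT T' → (∀ c, ∀ k ∈ T' c, (k : ℕ) < m) → S ⊆ openCors ρ ν →
      ((-β) ^ (svtSize (Tof (ν := ν) ρ t T' S) - skewSize μ ν)
          • ∏ c, ∏ k ∈ Tof (ν := ν) ρ t T' S c, (X k : MvPolynomial (Fin n) R))
      = ((-β) ^ (svtSize T' - skewSize μ ρ) • ∏ c, ∏ k ∈ T' c, (X k : MvPolynomial (Fin n) R))
          * ((X t : MvPolynomial (Fin n) R) ^ skewSize ρ ν
            * ((-β) ^ S.card • (X t : MvPolynomial (Fin n) R) ^ S.card)) := by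
    intro T' S hT'svt hT'bd hS
    have hsz := Tof_size (ν := ν) ht hμρ hρν hT'bd hS
    have hge := svtSize_ge hT'svt
    have hsplit := skewSize_add hμρ hρν
    have he : svtSize (Tof (ν := ν) ρ t T' S) - skewSize μ ν
        = (svtSize T' - skewSize μ ρ) + S.card := by omega
    have hmono := Tof_monomial (ν := ν) ht hμρ hρν hT'bd hS
      (fun k => (X k : MvPolynomial (Fin n) R))
    rw [he, hmono]
    simp only [pow_add, smul_eq_C_mul, map_mul]
    ring
  -- rewrite the right-hand side as a double sum
  rw [GsvtLe, Finset.sum_mul]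
  have hrhs : ∀ T' : ↥(dShape μ ρ) → Finset (Fin n),
      ((-β) ^ (svtSize T' - skewSize μ ρ) • ∏ c, ∏ k ∈ T' c, (X k : MvPolynomial (Fin n) R))
          * ((X t : MvPolynomial (Fin n) R) ^ skewSize ρ ν
            * ∑ S ∈ (openCors ρ ν).powerset,
                (-β) ^ S.card • (X t : MvPolynomial (Fin n) R) ^ S.card)
      = ∑ S ∈ (openCors ρ ν).powerset,
          ((-β) ^ (svtSize T' - skewSize μ ρ) • ∏ c, ∏ k ∈ T' c, (X k : MvPolynomial (Fin n) R))
            * ((X t : MvPolynomial (Fin n) R) ^ skewSize ρ ν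
              * ((-β) ^ S.card • (X t : MvPolynomial (Fin n) R) ^ S.card)) := by
    intro T'
    rw [Finset.mul_sum, Finset.mul_sum]
  simp_rw [hrhs]
  rw [← Finset.sum_product']
  -- the bijection
  refine Finset.sum_bij' (fun T _ => (Tback m hρν T, Sback (ρ := ρ) ν t T))
    (fun p _ => Tof ρ t p.1 p.2) ?_ ?_ ?_ ?_ ?_
  · -- forward membership
    intro T hT
    rw [Finset.mem_filter, Finset.mem_filter] at hT
    obtain ⟨⟨-, hsvt, hbd⟩, hfib⟩ := hT
    have hρeq : rho m T hμν hsvt = ρ := by rw [← rhoTot_eq hμν hsvt]; exact hfib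
    rw [Finset.mem_product, Finset.mem_filter]
    exact ⟨⟨Finset.mem_univ _, Tback_svt hμν hρν hsvt hρeq, Tback_bd hρν⟩,
      Finset.mem_powerset.mpr Sback_subset⟩
  · -- backward membership
    rintro ⟨T', S⟩ hp
    rw [Finset.mem_product, Finset.mem_filter, Finset.mem_powerset] at hp
    obtain ⟨⟨-, hT'svt, hT'bd⟩, hS⟩ := hp
    rw [Finset.mem_filter, Finset.mem_filter]
    exact ⟨⟨Finset.mem_univ _, Tof_svt ht hμρ hstrip hT'svt hT'bd hS,
      Tof_bound ht hT'bd⟩, Tof_rhoTot ht hμρ hρν hT'svt hT'bd hμν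
        (Tof_svt ht hμρ hstrip hT'svt hT'bd hS)⟩
  · -- left inverse
    intro T hT
    rw [Finset.mem_filter, Finset.mem_filter] at hT
    obtain ⟨⟨-, hsvt, hbd⟩, hfib⟩ := hT
    have hρeq : rho m T hμν hsvt = ρ := by rw [← rhoTot_eq hμν hsvt]; exact hfib
    exact Tof_Tback ht hμν hμρ hρν hsvt hbd hρeq
  · -- right inverse
    rintro ⟨T', S⟩ hp
    rw [Finset.mem_product, Finset.mem_filter, Finset.mem_powerset] at hp
    obtain ⟨⟨-, hT'svt, hT'bd⟩, hS⟩ := hp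
    rw [Prod.ext_iff]
    exact ⟨Tback_Tof ht hρν hT'bd, Sback_Tof ht hμρ hρν hT'bd hS⟩
  · -- weights
    intro T hT
    rw [Finset.mem_filter, Finset.mem_filter] at hT
    obtain ⟨⟨-, hsvt, hbd⟩, hfib⟩ := hT
    have hρeq : rho m T hμν hsvt = ρ := by rw [← rhoTot_eq hμν hsvt]; exact hfib
    have hTsvt := Tback_svt hμν hρν hsvt hρeq
    have hTbd := Tback_bd (m := m) (μ := μ) (ν := ν) (ρ := ρ) hρν (T := T)
    conv_lhs => rw [← Tof_Tback ht hμν hμρ hρν hsvt hbd hρeq]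
    exact pairweight _ _ hTsvt hTbd Sback_subset

end SkewG
namespace SkewG
open YoungDiagram Finset

section MainInduction

variable (R : Type*) [CommRing R] (β : R) (n N : ℕ)

/-- Partial product of the operators `A(x_m) ⋯ A(x_1)`. -/
def opP (m : ℕ) : Module.End (MvPolynomial (Fin n) R) (YoungDiagram →₀ MvPolynomial (Fin n) R) :=
  (((List.ofFn fun k : Fin n =>
    opA (MvPolynomial (Fin n) R) (MvPolynomial.C β) (MvPolynomial.X k) N).take m).reverse).prod

lemma opP_zero : opP R β n N 0 = 1 := by
  simp [opP]

lemma opP_succ (m : ℕ) (hm : m < n) :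
    opP R β n N (m + 1)
      = opA (MvPolynomial (Fin n) R) (MvPolynomial.C β) (MvPolynomial.X ⟨m, hm⟩) N
          * opP R β n N m := by
  rw [opP, opP, List.take_succ, List.reverse_append, List.getElem?_eq_getElem
    (by simpa using hm)]
  simp only [List.getElem_ofFn]
  rw [Option.toList_some, List.reverse_singleton, List.singleton_append, List.prod_cons]

lemma opP_top (hn : 0 < n) : opP R β n N n = opAseq R β n N := by
  rw [opP, opAseq, List.take_of_length_le]
  simp

theorem main_ind (μ : YoungDiagram) (m : ℕ) (hm : m ≤ n) :
    (∀ ρ : YoungDiagram, ¬ μ ≤ ρ →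
      (opP R β n N m (Finsupp.single μ 1) : YoungDiagram →₀ MvPolynomial (Fin n) R) ρ = 0) ∧
    (∀ ν : YoungDiagram, μ ≤ ν → ν.rowLen 0 ≤ N →
      (opP R β n N m (Finsupp.single μ 1) : YoungDiagram →₀ MvPolynomial (Fin n) R) ν
        = GsvtLe R β n m μ ν) := by
  induction m with
  | zero =>
    rw [opP_zero]
    constructor
    · intro ρ hρ
      rw [Module.End.one_apply, Finsupp.single_apply, if_neg]
      rintro rfl
      exact hρ le_rfl
    · intro ν hμν hN
      rw [Module.End.one_apply, Finsupp.single_apply, GsvtLe_zero R β n μ ν hμν]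
  | succ m ih =>
    have hm' : m < n := hm
    obtain ⟨ihV, ihH⟩ := ih (by omega)
    rw [opP_succ R β n N m hm', Module.End.mul_apply]
    set w := opP R β n N m (Finsupp.single μ 1) with hw
    constructor
    · intro ρ hρ
      rw [end_apply]
      refine Finset.sum_eq_zero fun σ hσ => ?_
      by_cases hle : σ ≤ ρ
      · by_cases hμσ : μ ≤ σ
        · exact absurd (le_trans hμσ hle) hρ
        · rw [ihV σ hμσ, zero_mul]
      · rw [opA_single, passCoeff_le hle, mul_zero]
    · intro ν hμν hN'
      rw [end_apply]
      have hsub : ∀ ρ : YoungDiagram,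
          (opA (MvPolynomial (Fin n) R) (MvPolynomial.C β) (MvPolynomial.X ⟨m, hm'⟩) N
            (Finsupp.single ρ 1) : YoungDiagram →₀ MvPolynomial (Fin n) R) ν
          = passCoeff (MvPolynomial (Fin n) R) (MvPolynomial.C β)
              (MvPolynomial.X ⟨m, hm'⟩) N ρ ν := fun ρ => opA_single _ _ _ _ _
      simp only [hsub]
      rw [key_step R β m hm' N μ ν hμν hN']
      have hagree : ∀ ρ ∈ w.support ∪ subDiagrams ν,
          w ρ * passCoeff (MvPolynomial (Fin n) R) (MvPolynomial.C β)
              (MvPolynomial.X ⟨m, hm'⟩) N ρ ν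
          = (if μ ≤ ρ then GsvtLe R β n m μ ρ else 0)
              * passCoeff (MvPolynomial (Fin n) R) (MvPolynomial.C β)
                  (MvPolynomial.X ⟨m, hm'⟩) N ρ ν := by
        intro ρ _
        by_cases hle : ρ ≤ ν
        · by_cases hμρ : μ ≤ ρ
          · rw [if_pos hμρ, ihH ρ hμρ (le_trans (rowLen_le_of_le hle 0) hN')]
          · rw [if_neg hμρ, ihV ρ hμρ]
        · rw [passCoeff_le hle, mul_zero, mul_zero]
      calc ∑ ρ ∈ w.support, w ρ * passCoeff (MvPolynomial (Fin n) R) (MvPolynomial.C β)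
              (MvPolynomial.X ⟨m, hm'⟩) N ρ ν
          = ∑ ρ ∈ w.support ∪ subDiagrams ν, w ρ * passCoeff (MvPolynomial (Fin n) R)
              (MvPolynomial.C β) (MvPolynomial.X ⟨m, hm'⟩) N ρ ν := by
            refine Finset.sum_subset Finset.subset_union_left fun ρ _ hρ => ?_
            rw [Finsupp.notMem_support_iff.mp hρ, zero_mul]
        _ = ∑ ρ ∈ w.support ∪ subDiagrams ν,
              (if μ ≤ ρ then GsvtLe R β n m μ ρ else 0)
                * passCoeff (MvPolynomial (Fin n) R) (MvPolynomial.C β)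
                    (MvPolynomial.X ⟨m, hm'⟩) N ρ ν := Finset.sum_congr rfl hagree
        _ = ∑ ρ ∈ subDiagrams ν,
              (if μ ≤ ρ then GsvtLe R β n m μ ρ else 0)
                * passCoeff (MvPolynomial (Fin n) R) (MvPolynomial.C β)
                    (MvPolynomial.X ⟨m, hm'⟩) N ρ ν := by
            refine (Finset.sum_subset Finset.subset_union_right fun ρ _ hρ => ?_).symm
            have hle : ¬ ρ ≤ ν := fun h => hρ (mem_subDiagrams_of_le h)
            rw [passCoeff_le hle, mul_zero]

end MainInduction

end SkewG

theorem skew_grothendieck_svt_formula' (R : Type*) [CommRing R] (β : R)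
    (μ lam : YoungDiagram) (hμ : μ ≤ lam) (n : ℕ) (hn : 1 ≤ n) (N : ℕ)
    (hN : lam.rowLen 0 ≤ N) :
    (opAseq R β n N) (Finsupp.single μ 1) lam = Gsvt R β n μ lam := by
  rw [← SkewG.opP_top R β n N (by omega), (SkewG.main_ind R β n N μ n le_rfl).2 lam hμ hN,
    SkewG.GsvtLe_top]
/-- Combinatorial formula for the skew Grothendieck polynomial: the operator-defined
polynomial `⟨A(x_n)⋯A(x_1)·μ, λ⟩` equals `Σ_T (-β)^{|T|-|λ/μ|} x^T` over set-valued tableaux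
`T` of shape `λ//μ` with entries in `{1, …, n}` (truncation level `N` at least the number of
columns of `λ`). -/
theorem skew_grothendieck_svt_formula (R : Type*) [CommRing R] (β : R)
    (μ lam : YoungDiagram) (hμ : μ ≤ lam) (n : ℕ) (hn : 1 ≤ n) (N : ℕ)
    (hN : lam.rowLen 0 ≤ N) :
    (opAseq R β n N) (Finsupp.single μ 1) lam = Gsvt R β n μ lam := by
  exact skew_grothendieck_svt_formula' R β μ lam hμ n hn N hN
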